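/- arXiv:2011.08602 — 11 statements merged into one kernel-verified Lean document; each statement's English description precedes it below -/
import Mathlib

section
/- Let H be a real Hilbert space and A : H → H a bounded linear operator which is non-expansive (‖A x‖ ≤ ‖x‖ for all x) and asymptotically regular (for every x ∈ H, ‖A^{k+1} x − A^k x‖ → 0 as k → ∞). Then for every x ∈ H the sequence (A^k x)_{k∈ℕ} converges strongly to the orthogonal projection of x onto Ker(I − A). -/
/-!
Let `p` be the orthogonal projection of `x` onto the fixed space `K = ker (I - A)`; the powers of
`A` fix `p`, so it suffices to show `A^k (x - p) → 0`. A vector orthogonal to the range of `I - A`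
is fixed by `A†`, and since `‖A‖ ≤ 1` equality in Cauchy–Schwarz forces it to be fixed by `A`;
hence `Kᗮ` lies in the closure of the range of `I - A`. On that range
`A^k (z - A z) = A^k z - A^(k+1) z → 0` by asymptotic regularity, and the convergence passes to the
closure because the powers of `A` are uniformly bounded, hence equicontinuous.
-/

open Filter Topology

namespace ContinuousLinearMap

section Module

variable {R M : Type*} [Ring R] [TopologicalSpace M] [AddCommGroup M] [IsTopologicalAddGroup M]
  [Module R M]

def IsAsymptoticallyRegular (f : M →L[R] M) : Prop :=
  ∀ x : M, Tendsto (fun k : ℕ => (f ^ (k + 1)) x - (f ^ k) x) atTop (𝓝 0)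

theorem mem_ker_one_sub_iff {f : M →L[R] M} {x : M} : x ∈ (1 - f).ker ↔ f x = x := by
  rw [LinearMap.mem_ker, coe_coe, sub_apply, one_apply_eq_self, sub_eq_zero, eq_comm]

theorem IsAsymptoticallyRegular.tendsto_pow_apply_one_sub_apply {f : M →L[R] M}
    (hf : f.IsAsymptoticallyRegular) (z : M) :
    Tendsto (fun k : ℕ => (f ^ k) ((1 - f) z)) atTop (𝓝 0) := by
  have h : (fun k : ℕ => (f ^ k) ((1 - f) z)) = fun k => -((f ^ (k + 1)) z - (f ^ k) z) := by
    funext k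
    simp [pow_succ, map_sub]
  simpa [h] using (hf z).neg

end Module

section Normed

variable {𝕜 E : Type*} [NontriviallyNormedField 𝕜] [SeminormedAddCommGroup E] [NormedSpace 𝕜 E]

theorem norm_pow_le_one_of_norm_le_one {f : E →L[𝕜] E} (hf : ‖f‖ ≤ 1) (k : ℕ) : ‖f ^ k‖ ≤ 1 := by
  induction k with
  | zero => exact norm_id_le
  | succ k ih => rw [pow_succ]; exact (norm_mul_le _ _).trans (mul_le_one₀ ih (norm_nonneg f) hf)

theorem IsAsymptoticallyRegular.tendsto_pow_apply_zero_of_mem_closure_range {f : E →L[𝕜] E}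
    (hreg : f.IsAsymptoticallyRegular) (hf : ‖f‖ ≤ 1) {y : E}
    (hy : y ∈ (1 - f).range.topologicalClosure) :
    Tendsto (fun k : ℕ => (f ^ k) y) atTop (𝓝 0) := by
  have hequi : Equicontinuous fun k : ℕ => ⇑(f ^ k) :=
    (LipschitzWith.uniformEquicontinuous _ 1 fun k =>
      (f ^ k).lipschitz.weaken (norm_pow_le_one_of_norm_le_one hf k)).equicontinuous
  refine closure_minimal ?_ (hequi.isClosed_setOfPred_tendsto continuous_const) hy
  rintro _ ⟨z, rfl⟩
  exact hreg.tendsto_pow_apply_one_sub_apply z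

end Normed

section InnerProduct

variable {𝕜 E : Type*} [RCLike 𝕜] [NormedAddCommGroup E] [InnerProductSpace 𝕜 E] [CompleteSpace E]

theorem apply_eq_self_of_adjoint_apply_eq_self {f : E →L[𝕜] E} (hf : ‖f‖ ≤ 1) {x : E}
    (hx : adjoint f x = x) : f x = x := by
  refine eq_of_norm_le_re_inner_eq_norm_sq (𝕜 := 𝕜)
    ((f.le_of_opNorm_le hf x).trans_eq (one_mul _)) ?_
  rw [← adjoint_inner_right, hx, inner_self_eq_norm_sq]

theorem orthogonal_ker_one_sub_le_closure_range {f : E →L[𝕜] E} (hf : ‖f‖ ≤ 1) :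
    (1 - f).kerᗮ ≤ (1 - f).range.topologicalClosure := by
  rw [← Submodule.orthogonal_orthogonal_eq_closure, orthogonal_range]
  refine Submodule.orthogonal_le fun x hx => ?_
  rw [map_sub, adjoint_one, mem_ker_one_sub_iff] at hx
  exact mem_ker_one_sub_iff.2 (apply_eq_self_of_adjoint_apply_eq_self hf hx)

end InnerProduct

end ContinuousLinearMap

open ContinuousLinearMap in
/-- **Lemma (Je).** Let `H` be a real Hilbert space and `A : H → H` a bounded linear
operator which is non-expansive and asymptotically regular. Then for every `x ∈ H` the
sequence `(A^k x)` converges strongly to the orthogonal projection of `x` onto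
`Ker (I - A)`. -/
theorem maz'ya_picard_converges_to_projection
    {H : Type*} [NormedAddCommGroup H] [InnerProductSpace ℝ H] [CompleteSpace H]
    (A : H →L[ℝ] H)
    (hnonexp : ∀ x : H, ‖A x‖ ≤ ‖x‖)
    (hasreg : ∀ x : H, Filter.Tendsto (fun k : ℕ => (A ^ (k + 1)) x - (A ^ k) x)
      Filter.atTop (nhds 0))
    (x : H) :
    Filter.Tendsto (fun k : ℕ => (A ^ k) x) Filter.atTop
      (nhds (Submodule.orthogonalProjectionOnto (LinearMap.ker ((ContinuousLinearMap.id ℝ H - A : H →L[ℝ] H) : H →ₗ[ℝ] H)) x : H)) := by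
  have hA : ‖A‖ ≤ 1 := A.opNorm_le_bound zero_le_one (by simpa using hnonexp)
  set K := LinearMap.ker ((ContinuousLinearMap.id ℝ H - A : H →L[ℝ] H) : H →ₗ[ℝ] H)
  have hK : K = (1 - A).ker := rfl
  set p : H := (K.orthogonalProjectionOnto x : H)
  have hAp : A p = p := mem_ker_one_sub_iff.1 (hK ▸ (K.orthogonalProjectionOnto x).2)
  have hp : ∀ k : ℕ, (A ^ k) p = p := fun k => by
    induction k with
    | zero => rfl
    | succ k ih => rw [pow_succ, mul_apply_eq_comp, hAp, ih]
  have hrest : Tendsto (fun k : ℕ => (A ^ k) (x - p)) atTop (𝓝 0) :=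
    IsAsymptoticallyRegular.tendsto_pow_apply_zero_of_mem_closure_range hasreg hA
      (orthogonal_ker_one_sub_le_closure_range hA (hK ▸ K.sub_starProjection_mem_orthogonal x))
  simpa [map_sub, hp] using hrest.const_add p
end

section
/- Let X be a Banach space, E ⊆ X a convex compact subset, and T : E → E a continuous map. Let A = (a_{kj}) be an infinite lower-triangular matrix with a_{kj} ≥ 0, a_{kj} = 0 for j > k, Σ_{j=1}^{k} a_{kj} = 1 for every k, and which is regular in the sense that lim_{k→∞} a_{kj} = 0 for each fixed j. Given x₁ ∈ E, define the Mann iteration by v_k := Σ_{j=1}^{k} a_{kj} x_j and x_{k+1} := T(v_k). If either of the sequences (x_k) or (v_k) converges, then the other also converges to the same limit, and this common limit is a fixed point of T. -/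
open Filter Finset

/-- Toeplitz-type lemma: a regular nonnegative row-stochastic matrix transforms
convergent sequences into sequences converging to the same limit. -/
lemma mann_toeplitz_aux {X : Type*} [NormedAddCommGroup X] [NormedSpace ℝ X]
    (a : ℕ → ℕ → ℝ)
    (ha_nonneg : ∀ k j, 0 ≤ a k j)
    (ha_row : ∀ k, 1 ≤ k → ∑ j ∈ Icc 1 k, a k j = 1)
    (ha_reg : ∀ j, Tendsto (fun k => a k j) atTop (nhds 0))
    {y : ℕ → X} {L : X} (hy : Tendsto y atTop (nhds L)) :
    Tendsto (fun k => ∑ j ∈ Icc 1 k, a k j • y j) atTop (nhds L) := by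
  -- the centered sums tend to 0
  have hdiff : Tendsto (fun j => ‖y j - L‖) atTop (nhds 0) := by
    have := hy.sub_const L
    simpa using this.norm
  obtain ⟨C, hC⟩ := hdiff.bddAbove_range
  set C' : ℝ := max C 1 with hC'
  have hC'pos : 0 < C' := lt_of_lt_of_le one_pos (le_max_right _ _)
  have hCb : ∀ j, ‖y j - L‖ ≤ C' := by
    intro j
    exact le_trans (hC (Set.mem_range_self j)) (le_max_left _ _)
  have hs : Tendsto (fun k => ∑ j ∈ Icc 1 k, a k j • (y j - L)) atTop (nhds 0) := by
    rw [NormedAddCommGroup.tendsto_nhds_zero]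
    intro ε hε
    -- choose N beyond which y is ε/2-close to L
    obtain ⟨N₀, hN₀⟩ := (Metric.tendsto_atTop.mp hy) (ε / 2) (half_pos hε)
    set N : ℕ := max N₀ 1 with hN
    have hN1 : 1 ≤ N := le_max_right _ _
    -- finite head sum of matrix entries tends to zero
    have hhead : Tendsto (fun k => ∑ j ∈ Icc 1 N, a k j) atTop (nhds 0) := by
      have := tendsto_finset_sum (Icc 1 N) (fun j _ => ha_reg j)
      simpa using this
    have hhead' : ∀ᶠ k in atTop, ∑ j ∈ Icc 1 N, a k j < ε / 2 / C' := by
      have hpos : 0 < ε / 2 / C' := div_pos (half_pos hε) hC'pos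
      exact (hhead.eventually (eventually_lt_nhds hpos)) |>.mono (fun k hk => by
        simpa using hk)
    filter_upwards [hhead', eventually_ge_atTop N] with k hk hkN
    have hsplit : Icc 1 k = Icc 1 N ∪ Ioc N k := by
      ext j; simp only [mem_union, mem_Icc, mem_Ioc]; omega
    have hdisj : Disjoint (Icc 1 N) (Ioc N k) := by
      rw [Finset.disjoint_left]
      intro j hj hj'
      simp only [mem_Icc] at hj
      simp only [mem_Ioc] at hj'
      omega
    calc ‖∑ j ∈ Icc 1 k, a k j • (y j - L)‖
        ≤ ∑ j ∈ Icc 1 k, ‖a k j • (y j - L)‖ := norm_sum_le _ _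
      _ = ∑ j ∈ Icc 1 k, a k j * ‖y j - L‖ := by
          refine Finset.sum_congr rfl fun j _ => ?_
          rw [norm_smul, Real.norm_eq_abs, abs_of_nonneg (ha_nonneg k j)]
      _ = (∑ j ∈ Icc 1 N, a k j * ‖y j - L‖) + ∑ j ∈ Ioc N k, a k j * ‖y j - L‖ := by
          rw [hsplit, Finset.sum_union hdisj]
      _ < ε / 2 + ε / 2 := by
          have h1 : ∑ j ∈ Icc 1 N, a k j * ‖y j - L‖ < ε / 2 := by
            calc ∑ j ∈ Icc 1 N, a k j * ‖y j - L‖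
                ≤ ∑ j ∈ Icc 1 N, a k j * C' := by
                  refine Finset.sum_le_sum fun j _ => ?_
                  exact mul_le_mul_of_nonneg_left (hCb j) (ha_nonneg k j)
              _ = (∑ j ∈ Icc 1 N, a k j) * C' := by rw [Finset.sum_mul]
              _ < (ε / 2 / C') * C' := by
                  exact mul_lt_mul_of_pos_right hk hC'pos
              _ = ε / 2 := by field_simp
          have h2 : ∑ j ∈ Ioc N k, a k j * ‖y j - L‖ ≤ ε / 2 := by
            calc ∑ j ∈ Ioc N k, a k j * ‖y j - L‖
                ≤ ∑ j ∈ Ioc N k, a k j * (ε / 2) := by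
                  refine Finset.sum_le_sum fun j hj => ?_
                  refine mul_le_mul_of_nonneg_left ?_ (ha_nonneg k j)
                  simp only [mem_Ioc] at hj
                  have := hN₀ j (le_trans (le_max_left _ _) (le_of_lt hj.1))
                  rw [dist_eq_norm] at this
                  exact le_of_lt this
              _ = (∑ j ∈ Ioc N k, a k j) * (ε / 2) := by rw [Finset.sum_mul]
              _ ≤ 1 * (ε / 2) := by
                  refine mul_le_mul_of_nonneg_right ?_ (le_of_lt (half_pos hε))
                  rw [← ha_row k (le_trans hN1 hkN)]
                  refine Finset.sum_le_sum_of_subset_of_nonneg ?_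
                    (fun j hj _ => ha_nonneg k j)
                  rw [hsplit]; exact Finset.subset_union_right
              _ = ε / 2 := one_mul _
          linarith
      _ = ε := by ring
  have heq : ∀ᶠ k in atTop, (∑ j ∈ Icc 1 k, a k j • (y j - L)) + L
      = ∑ j ∈ Icc 1 k, a k j • y j := by
    filter_upwards [eventually_ge_atTop 1] with k hk
    have : ∑ j ∈ Icc 1 k, a k j • (y j - L)
        = (∑ j ∈ Icc 1 k, a k j • y j) - (∑ j ∈ Icc 1 k, a k j) • L := by
      rw [Finset.sum_smul, ← Finset.sum_sub_distrib]
      refine Finset.sum_congr rfl fun j _ => ?_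
      rw [smul_sub]
    rw [this, ha_row k hk, one_smul]
    abel
  have := hs.add (tendsto_const_nhds (x := L))
  rw [zero_add] at this
  exact this.congr' heq

/-- **Mann's lemma.** Let `X` be a Banach space, `E ⊆ X` convex compact, `T : E → E`
continuous, and `A = (a k j)` an infinite lower-triangular row-stochastic regular matrix.
If either of the sequences `(x k)` or `(v k)` of the Mann iteration `M(x₁, A, T)`
converges, then the other converges to the same limit, and the common limit is a
fixed point of `T`. -/
theorem mann_iteration_limits
    {X : Type*} [NormedAddCommGroup X] [NormedSpace ℝ X] [CompleteSpace X]
    (E : Set X) (hEconv : Convex ℝ E) (hEcomp : IsCompact E)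
    (T : X → X) (hTmaps : Set.MapsTo T E E) (hTcont : ContinuousOn T E)
    (a : ℕ → ℕ → ℝ)
    (ha_nonneg : ∀ k j, 0 ≤ a k j)
    (ha_tri : ∀ k j, k < j → a k j = 0)
    (ha_row : ∀ k, 1 ≤ k → ∑ j ∈ Icc 1 k, a k j = 1)
    (ha_reg : ∀ j, Tendsto (fun k => a k j) atTop (nhds 0))
    (x v : ℕ → X)
    (hx1 : x 1 ∈ E)
    (hv : ∀ k, 1 ≤ k → v k = ∑ j ∈ Icc 1 k, a k j • x j)
    (hx : ∀ k, 1 ≤ k → x (k + 1) = T (v k))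
    (l : X)
    (hconv : Tendsto (fun k => x k) atTop (nhds l) ∨ Tendsto (fun k => v k) atTop (nhds l)) :
    Tendsto (fun k => x k) atTop (nhds l) ∧ Tendsto (fun k => v k) atTop (nhds l) ∧
      T l = l := by
  -- all iterates stay in E
  have hxE : ∀ k, 1 ≤ k → x k ∈ E := by
    intro k
    induction k using Nat.strong_induction_on with
    | _ k ih =>
      intro hk
      match k, hk with
      | 1, _ => exact hx1
      | (m + 2), _ =>
        have hm1 : 1 ≤ m + 1 := Nat.le_add_left 1 m
        have hvmE : v (m + 1) ∈ E := by
          rw [hv (m + 1) hm1]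
          refine hEconv.sum_mem (fun j _ => ha_nonneg _ j) (ha_row _ hm1) ?_
          intro j hj
          simp only [mem_Icc] at hj
          exact ih j (by omega) hj.1
        rw [hx (m + 1) hm1]
        exact hTmaps hvmE
  have hvE : ∀ k, 1 ≤ k → v k ∈ E := by
    intro k hk
    rw [hv k hk]
    refine hEconv.sum_mem (fun j _ => ha_nonneg _ j) (ha_row _ hk) ?_
    intro j hj
    simp only [mem_Icc] at hj
    exact hxE j hj.1
  -- if x converges, so does v (to the same limit)
  have hXtoV : ∀ m : X, Tendsto x atTop (nhds m) → Tendsto v atTop (nhds m) := by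
    intro m hm
    refine (mann_toeplitz_aux a ha_nonneg ha_row ha_reg hm).congr' ?_
    filter_upwards [eventually_ge_atTop 1] with k hk
    exact (hv k hk).symm
  -- if v converges to m ∈ E, then x converges to T m
  have hVtoX : ∀ m ∈ E, Tendsto v atTop (nhds m) → Tendsto x atTop (nhds (T m)) := by
    intro m hm hvm
    have hvm' : Tendsto v atTop (nhdsWithin m E) := by
      rw [tendsto_nhdsWithin_iff]
      refine ⟨hvm, ?_⟩
      filter_upwards [eventually_ge_atTop 1] with k hk
      exact hvE k hk
    have h1 : Tendsto (fun k => T (v k)) atTop (nhds (T m)) :=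
      (hTcont m hm).tendsto.comp hvm'
    have h2 : Tendsto (fun k => x (k + 1)) atTop (nhds (T m)) := by
      refine h1.congr' ?_
      filter_upwards [eventually_ge_atTop 1] with k hk
      exact (hx k hk).symm
    exact (tendsto_add_atTop_iff_nat 1).mp h2
  rcases hconv with hxl | hvl
  · have hvl : Tendsto v atTop (nhds l) := hXtoV l hxl
    have hlE : l ∈ E := hEcomp.isClosed.mem_of_tendsto hxl
      ((eventually_ge_atTop 1).mono fun k hk => hxE k hk)
    have hxTl : Tendsto x atTop (nhds (T l)) := hVtoX l hlE hvl
    exact ⟨hxl, hvl, tendsto_nhds_unique hxTl hxl⟩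
  · have hlE : l ∈ E := hEcomp.isClosed.mem_of_tendsto hvl
      ((eventually_ge_atTop 1).mono fun k hk => hvE k hk)
    have hxTl : Tendsto x atTop (nhds (T l)) := hVtoX l hlE hvl
    have hvTl : Tendsto v atTop (nhds (T l)) := hXtoV (T l) hxTl
    have hfix : T l = l := tendsto_nhds_unique hvTl hvl
    rw [hfix] at hxTl
    exact ⟨hxTl, hvl, hfix⟩
end

section
/- Let X be a uniformly convex Banach space, E ⊆ X a convex subset, and T : E → E a non-expansive map (‖T x − T y‖ ≤ ‖x − y‖ for all x, y ∈ E) having at least one fixed point in E. Let (d_k) be a sequence with d_k ∈ [0,1] such that Σ_{k=1}^{∞} d_k (1 − d_k) diverges. Then for every starting point v₁ ∈ E, the segmenting Mann iteration v_{k+1} := (1 − d_k) v_k + d_k T(v_k) satisfies that the sequence (v_k − T(v_k)) converges strongly to zero. -/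
open Filter Finset

/-- Uniform-convexity combination bound: if `x,y` lie in the ball of radius `s ≤ r`,
their difference has norm at least `ε`, and `δ` witnesses uniform convexity at level `ε/r`,
then any convex combination of `x` and `y` has norm at most `s - t(1-t)·(ε δ / 2)`. -/
lemma combo_norm_bound {X : Type*} [NormedAddCommGroup X] [NormedSpace ℝ X]
    {ε δ r : ℝ} (hε : 0 < ε) (hδ : 0 < δ)
    (H : ∀ ⦃x : X⦄, ‖x‖ ≤ 1 → ∀ ⦃y : X⦄, ‖y‖ ≤ 1 → ε / r ≤ ‖x - y‖ → ‖x + y‖ ≤ 2 - δ)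
    {x y : X} {s t : ℝ} (hx : ‖x‖ ≤ s) (hy : ‖y‖ ≤ s) (hsr : s ≤ r)
    (hxy : ε ≤ ‖x - y‖) (ht0 : 0 ≤ t) (ht1 : t ≤ 1) :
    ‖(1 - t) • x + t • y‖ ≤ s - t * (1 - t) * (ε * δ / 2) := by
  have hs : 0 < s := by
    have h2s : ε ≤ 2 * s := by
      calc ε ≤ ‖x - y‖ := hxy
        _ ≤ ‖x‖ + ‖y‖ := norm_sub_le _ _
        _ ≤ 2 * s := by linarith
    linarith
  have hr : 0 < r := lt_of_lt_of_le hs hsr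
  have hεs : ε ≤ 2 * s := by
    calc ε ≤ ‖x - y‖ := hxy
      _ ≤ ‖x‖ + ‖y‖ := norm_sub_le _ _
      _ ≤ 2 * s := by linarith
  -- normalize
  have hx' : ‖s⁻¹ • x‖ ≤ 1 := by
    rw [norm_smul, Real.norm_eq_abs, abs_of_pos (inv_pos.2 hs)]
    rw [inv_mul_le_one₀ hs]
    simpa using hx
  have hy' : ‖s⁻¹ • y‖ ≤ 1 := by
    rw [norm_smul, Real.norm_eq_abs, abs_of_pos (inv_pos.2 hs)]
    rw [inv_mul_le_one₀ hs]
    simpa using hy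
  have hxy' : ε / r ≤ ‖s⁻¹ • x - s⁻¹ • y‖ := by
    rw [← smul_sub, norm_smul, Real.norm_eq_abs, abs_of_pos (inv_pos.2 hs)]
    have h1 : ε / r ≤ ε / s := by
      apply div_le_div_of_nonneg_left hε.le hs hsr
    calc ε / r ≤ ε / s := h1
      _ ≤ ‖x - y‖ / s := by gcongr
      _ = s⁻¹ * ‖x - y‖ := by rw [div_eq_inv_mul]
  have hsum : ‖x + y‖ ≤ 2 * s - s * δ := by
    have := H hx' hy' hxy'
    rw [← smul_add, norm_smul, Real.norm_eq_abs, abs_of_pos (inv_pos.2 hs)] at this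
    have := (inv_mul_le_iff₀ hs).1 this
    nlinarith
  -- midpoint bound
  have hmid : ‖(2 : ℝ)⁻¹ • (x + y)‖ ≤ s - ε * δ / 4 := by
    rw [norm_smul, Real.norm_eq_abs]
    have : |((2:ℝ)⁻¹)| = 2⁻¹ := by norm_num
    rw [this]
    nlinarith [norm_nonneg (x + y)]
  have hc : 0 ≤ ε * δ / 2 := by positivity
  rcases le_or_gt t 2⁻¹ with hhalf | hhalf
  · have hdecomp : (1 - t) • x + t • y = (1 - 2 * t) • x + (2 * t) • ((2:ℝ)⁻¹ • (x + y)) := by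
      rw [smul_smul]
      have : 2 * t * 2⁻¹ = t := by ring
      rw [this, smul_add]
      module
    rw [hdecomp]
    calc ‖(1 - 2 * t) • x + (2 * t) • ((2:ℝ)⁻¹ • (x + y))‖
        ≤ ‖(1 - 2 * t) • x‖ + ‖(2 * t) • ((2:ℝ)⁻¹ • (x + y))‖ := norm_add_le _ _
      _ ≤ (1 - 2 * t) * s + (2 * t) * (s - ε * δ / 4) := by
          rw [norm_smul, norm_smul, Real.norm_eq_abs, Real.norm_eq_abs,
            abs_of_nonneg (by linarith : (0:ℝ) ≤ 1 - 2 * t),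
            abs_of_nonneg (by linarith : (0:ℝ) ≤ 2 * t)]
          exact add_le_add (mul_le_mul_of_nonneg_left hx (by linarith))
            (mul_le_mul_of_nonneg_left hmid (by linarith))
      _ = s - t * (ε * δ / 2) := by ring
      _ ≤ s - t * (1 - t) * (ε * δ / 2) := by nlinarith [mul_nonneg (mul_nonneg ht0 ht0) hc]
  · have hdecomp : (1 - t) • x + t • y = (2 * t - 1) • y + (2 * (1 - t)) • ((2:ℝ)⁻¹ • (x + y)) := by
      rw [smul_smul]
      have : 2 * (1 - t) * 2⁻¹ = 1 - t := by ring
      rw [this, smul_add]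
      module
    rw [hdecomp]
    calc ‖(2 * t - 1) • y + (2 * (1 - t)) • ((2:ℝ)⁻¹ • (x + y))‖
        ≤ ‖(2 * t - 1) • y‖ + ‖(2 * (1 - t)) • ((2:ℝ)⁻¹ • (x + y))‖ := norm_add_le _ _
      _ ≤ (2 * t - 1) * s + (2 * (1 - t)) * (s - ε * δ / 4) := by
          rw [norm_smul, norm_smul, Real.norm_eq_abs, Real.norm_eq_abs,
            abs_of_nonneg (by linarith : (0:ℝ) ≤ 2 * t - 1),
            abs_of_nonneg (by linarith : (0:ℝ) ≤ 2 * (1 - t))]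
          exact add_le_add (mul_le_mul_of_nonneg_left hy (by linarith))
            (mul_le_mul_of_nonneg_left hmid (by linarith))
      _ = s - (1 - t) * (ε * δ / 2) := by ring
      _ ≤ s - t * (1 - t) * (ε * δ / 2) := by
          nlinarith [mul_nonneg (mul_nonneg (by linarith : (0:ℝ) ≤ 1 - t) (by linarith : (0:ℝ) ≤ 1 - t)) hc]

/-- **Groetsch's lemma.** Let `X` be a uniformly convex Banach space, `E ⊆ X` convex,
`T : E → E` non-expansive with at least one fixed point in `E`, and `(d k)` a sequence
in `[0,1]` with `∑ d k (1 - d k) = ∞`. Then for every starting point `v₁ ∈ E` the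
segmenting Mann iteration `v (k+1) = (1 - d k) • v k + d k • T (v k)` satisfies
`v k - T (v k) → 0` strongly. -/
theorem segmenting_mann_residual_tendsto_zero
    {X : Type*} [NormedAddCommGroup X] [NormedSpace ℝ X] [UniformConvexSpace X]
    [CompleteSpace X]
    (E : Set X) (hEconv : Convex ℝ E)
    (T : X → X) (hTmaps : Set.MapsTo T E E)
    (hTnonexp : ∀ x ∈ E, ∀ y ∈ E, ‖T x - T y‖ ≤ ‖x - y‖)
    (x₀ : X) (hx₀ : x₀ ∈ E) (hfix : T x₀ = x₀)
    (d : ℕ → ℝ) (hd : ∀ k, d k ∈ Set.Icc (0 : ℝ) 1)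
    (hdiv : Tendsto (fun n => ∑ k ∈ Icc 1 n, d k * (1 - d k)) atTop atTop)
    (v : ℕ → X) (hv1 : v 1 ∈ E)
    (hrec : ∀ k, 1 ≤ k → v (k + 1) = (1 - d k) • v k + d k • T (v k)) :
    Tendsto (fun k => v k - T (v k)) atTop (nhds 0) := by
  -- membership
  have hmem : ∀ k, 1 ≤ k → v k ∈ E := by
    intro k hk
    induction k, hk using Nat.le_induction with
    | base => exact hv1
    | succ n hn ih =>
      rw [hrec n hn]
      exact hEconv ih (hTmaps ih) (by linarith [(hd n).2]) (hd n).1 (by ring)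
  set ρ : ℕ → ℝ := fun k => ‖v k - T (v k)‖ with hρ
  set rr : ℕ → ℝ := fun k => ‖v k - x₀‖ with hrr
  -- r is nonincreasing on k ≥ 1
  have hrmono : ∀ k, 1 ≤ k → rr (k + 1) ≤ rr k := by
    intro k hk
    have hvk := hmem k hk
    have hTle : ‖T (v k) - x₀‖ ≤ ‖v k - x₀‖ := by
      have := hTnonexp (v k) hvk x₀ hx₀
      rwa [hfix] at this
    simp only [hrr]
    rw [hrec k hk]
    have hdecomp : (1 - d k) • v k + d k • T (v k) - x₀
        = (1 - d k) • (v k - x₀) + d k • (T (v k) - x₀) := by module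
    rw [hdecomp]
    calc ‖(1 - d k) • (v k - x₀) + d k • (T (v k) - x₀)‖
        ≤ ‖(1 - d k) • (v k - x₀)‖ + ‖d k • (T (v k) - x₀)‖ := norm_add_le _ _
      _ ≤ (1 - d k) * ‖v k - x₀‖ + d k * ‖v k - x₀‖ := by
          rw [norm_smul, norm_smul, Real.norm_eq_abs, Real.norm_eq_abs,
            abs_of_nonneg (by linarith [(hd k).2] : (0:ℝ) ≤ 1 - d k),
            abs_of_nonneg (hd k).1]
          gcongr
          exact (hd k).1
      _ = ‖v k - x₀‖ := by ring
  have hrle : ∀ k, 1 ≤ k → rr k ≤ rr 1 := by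
    intro k hk
    induction k, hk using Nat.le_induction with
    | base => exact le_refl _
    | succ n hn ih => exact (hrmono n hn).trans ih
  -- residual nonincreasing on k ≥ 1
  have hρmono : ∀ k, 1 ≤ k → ρ (k + 1) ≤ ρ k := by
    intro k hk
    have hvk := hmem k hk
    have hvk1 := hmem (k + 1) (by omega)
    simp only [hρ]
    have h1 : v (k + 1) - T (v k) = (1 - d k) • (v k - T (v k)) := by
      rw [hrec k hk]; module
    have h2 : v k - v (k + 1) = d k • (v k - T (v k)) := by
      rw [hrec k hk]; module
    calc ‖v (k + 1) - T (v (k + 1))‖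
        ≤ ‖v (k + 1) - T (v k)‖ + ‖T (v k) - T (v (k + 1))‖ := by
          have : v (k+1) - T (v (k+1)) = (v (k+1) - T (v k)) + (T (v k) - T (v (k+1))) := by abel
          rw [this]; exact norm_add_le _ _
      _ ≤ (1 - d k) * ‖v k - T (v k)‖ + d k * ‖v k - T (v k)‖ := by
          gcongr ?_ + ?_
          · rw [h1, norm_smul, Real.norm_eq_abs,
              abs_of_nonneg (by linarith [(hd k).2] : (0:ℝ) ≤ 1 - d k)]
          · calc ‖T (v k) - T (v (k+1))‖ ≤ ‖v k - v (k+1)‖ := hTnonexp _ hvk _ hvk1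
              _ = d k * ‖v k - T (v k)‖ := by
                  rw [h2, norm_smul, Real.norm_eq_abs, abs_of_nonneg (hd k).1]
      _ = ‖v k - T (v k)‖ := by ring
  -- shifted residual is antitone
  have hanti : Antitone (fun k => ρ (k + 1)) := by
    apply antitone_nat_of_succ_le
    intro n
    exact hρmono (n + 1) (by omega)
  have hbdd : BddBelow (Set.range fun k => ρ (k + 1)) :=
    ⟨0, by rintro x ⟨k, rfl⟩; exact norm_nonneg _⟩
  set L : ℝ := ⨅ k, ρ (k + 1) with hL
  have htendL : Tendsto (fun k => ρ (k + 1)) atTop (nhds L) :=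
    tendsto_atTop_ciInf hanti hbdd
  have hL0 : 0 ≤ L := le_ciInf fun k => norm_nonneg _
  have hLle : ∀ k, L ≤ ρ (k + 1) := fun k => ciInf_le hbdd k
  -- main claim: L = 0
  have hLzero : L = 0 := by
    by_contra hne
    have hLpos : 0 < L := lt_of_le_of_ne hL0 (Ne.symm hne)
    -- radius bound
    have hr1pos : 0 < rr 1 := by
      have : L ≤ ρ 1 := by
        have := hLle 0
        simpa using this
      have h2 : ρ 1 ≤ 2 * rr 1 := by
        simp only [hρ, hrr]
        calc ‖v 1 - T (v 1)‖ = ‖(v 1 - x₀) - (T (v 1) - x₀)‖ := by abel_nf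
          _ ≤ ‖v 1 - x₀‖ + ‖T (v 1) - x₀‖ := norm_sub_le _ _
          _ ≤ ‖v 1 - x₀‖ + ‖v 1 - x₀‖ := by
              gcongr
              have := hTnonexp (v 1) hv1 x₀ hx₀
              rwa [hfix] at this
          _ = 2 * ‖v 1 - x₀‖ := by ring
      linarith
    obtain ⟨δ, hδpos, Hδ⟩ :=
      exists_forall_closed_ball_dist_add_le_two_sub X (div_pos hLpos hr1pos)
    set c : ℝ := L * δ / 2 with hc
    have hcpos : 0 < c := by positivity
    -- one-step decrease
    have hstep : ∀ k, 1 ≤ k → rr (k + 1) ≤ rr k - d k * (1 - d k) * c := by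
      intro k hk
      have hvk := hmem k hk
      have hTle : ‖T (v k) - x₀‖ ≤ ‖v k - x₀‖ := by
        have := hTnonexp (v k) hvk x₀ hx₀
        rwa [hfix] at this
      have hxyL : L ≤ ‖(v k - x₀) - (T (v k) - x₀)‖ := by
        have : (v k - x₀) - (T (v k) - x₀) = v k - T (v k) := by abel
        rw [this]
        obtain ⟨m, rfl⟩ : ∃ m, k = m + 1 := ⟨k - 1, by omega⟩
        exact hLle m
      have := combo_norm_bound hLpos hδpos Hδ (le_refl (‖v k - x₀‖))
        hTle (hrle k hk) hxyL (hd k).1 (hd k).2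
      simp only [hrr]
      rw [hrec k hk]
      have hdecomp : (1 - d k) • v k + d k • T (v k) - x₀
          = (1 - d k) • (v k - x₀) + d k • (T (v k) - x₀) := by module
      rw [hdecomp]
      exact this
    -- telescoping
    have hsum : ∀ n, c * (∑ k ∈ Icc 1 n, d k * (1 - d k)) + rr (n + 1) ≤ rr 1 := by
      intro n
      induction n with
      | zero => simp
      | succ m ih =>
        rw [Finset.sum_Icc_succ_top (by omega : 1 ≤ m + 1)]
        have hst := hstep (m + 1) (by omega)
        have : c * (∑ k ∈ Icc 1 m, d k * (1 - d k)) + (d (m+1) * (1 - d (m+1)) * c + rr (m + 2))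
            ≤ c * (∑ k ∈ Icc 1 m, d k * (1 - d k)) + rr (m + 1) := by
          linarith
        calc c * ((∑ k ∈ Icc 1 m, d k * (1 - d k)) + d (m+1) * (1 - d (m+1))) + rr (m + 1 + 1)
            = c * (∑ k ∈ Icc 1 m, d k * (1 - d k))
              + (d (m+1) * (1 - d (m+1)) * c + rr (m + 2)) := by ring
          _ ≤ c * (∑ k ∈ Icc 1 m, d k * (1 - d k)) + rr (m + 1) := this
          _ ≤ rr 1 := ih
    -- contradiction with divergence
    have hbound : ∀ n, (∑ k ∈ Icc 1 n, d k * (1 - d k)) ≤ rr 1 / c := by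
      intro n
      have h1 := hsum n
      have h2 : 0 ≤ rr (n + 1) := norm_nonneg _
      rw [le_div_iff₀ hcpos]
      linarith
    obtain ⟨n, hn⟩ := (hdiv.eventually (eventually_gt_atTop (rr 1 / c))).exists
    exact absurd (hbound n) (not_le.2 hn)
  -- conclude
  rw [tendsto_zero_iff_norm_tendsto_zero]
  have : Tendsto (fun k => ρ (k + 1)) atTop (nhds 0) := hLzero ▸ htendL
  exact (tendsto_add_atTop_iff_nat 1).1 this
end

section
/- Let H be a real Hilbert space, T_l : H → H a bounded linear operator with ‖T_l‖ ≤ 1, z ∈ H, and define the affine operator T x := T_l x + z. Let φ̄ be a fixed point of T, (d_k) a sequence in [0,1], and (φ_k) the segmenting Mann iteration φ_{k+1} := (1 − d_k) φ_k + d_k T(φ_k) starting from an arbitrary φ₁ ∈ H. If there exist ε > 0 and k₀ ∈ ℕ with ‖T(φ_k) − φ_k‖ ≥ ε for all k ≥ k₀, then there exists a constant c > 0 (depending only on ε and ‖φ₁ − φ̄‖) such that ‖φ_{k+1} − φ̄‖ ≤ (1 − c d_k (1 − d_k)) ‖φ_k − φ̄‖ for all k ≥ k₀. -/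
/-!
The Hilbert-space identity
`‖(1 - d) u + d v‖² = (1 - d) ‖u‖² + d ‖v‖² - d (1 - d) ‖u - v‖²`, applied to `u = x - φ̄` and
`v = T x - φ̄` with `‖v‖ ≤ ‖u‖`, shows that a Mann step decreases `‖x - φ̄‖²` by at least
`d (1 - d) ‖T x - x‖² ≥ d (1 - d) ε²`. Hence `‖φ k - φ̄‖ ≤ M := ‖φ 1 - φ̄‖`, and with
`c = ε² / (2 M²)` the additive decrease of the square becomes the factor `1 - c d (1 - d)` on
the norm.
-/

section InnerProductSpace

variable {E : Type*} [NormedAddCommGroup E] [InnerProductSpace ℝ E]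

theorem norm_one_sub_smul_add_smul_sq (t : ℝ) (x y : E) :
    ‖(1 - t) • x + t • y‖ ^ 2
      = (1 - t) * ‖x‖ ^ 2 + t * ‖y‖ ^ 2 - t * (1 - t) * ‖x - y‖ ^ 2 := by
  rw [norm_add_sq_real, norm_sub_sq_real, norm_smul, norm_smul, real_inner_smul_left,
    real_inner_smul_right, mul_pow, mul_pow, Real.norm_eq_abs, Real.norm_eq_abs, sq_abs, sq_abs]
  ring

theorem sq_norm_one_sub_smul_add_smul_sub_le {p x y : E} {t : ℝ} (ht : 0 ≤ t)
    (hy : ‖y - p‖ ≤ ‖x - p‖) :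
    ‖(1 - t) • x + t • y - p‖ ^ 2 ≤ ‖x - p‖ ^ 2 - t * (1 - t) * ‖y - x‖ ^ 2 := by
  have hshift : (1 - t) • x + t • y - p = (1 - t) • (x - p) + t • (y - p) := by module
  have hsq : t * ‖y - p‖ ^ 2 ≤ t * ‖x - p‖ ^ 2 := by gcongr
  rw [hshift, norm_one_sub_smul_add_smul_sq, sub_sub_sub_cancel_right, norm_sub_rev x y]
  linarith

end InnerProductSpace

theorem norm_add_sub_of_fixedPoint_le {𝕜 F : Type*} [NontriviallyNormedField 𝕜]
    [NormedAddCommGroup F] [NormedSpace 𝕜 F] (A : F →L[𝕜] F) (hA : ‖A‖ ≤ 1) {z p : F}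
    (hp : p = A p + z) (x : F) : ‖A x + z - p‖ ≤ ‖x - p‖ :=
  calc ‖A x + z - p‖ = ‖A (x - p)‖ := by
        rw [map_sub, eq_sub_of_add_eq hp.symm]; abel_nf
    _ ≤ ‖A‖ * ‖x - p‖ := A.le_opNorm _
    _ ≤ ‖x - p‖ := mul_le_of_le_one_left (norm_nonneg _) hA

theorem le_one_sub_mul_of_sq_le_one_sub_two_mul {a s N : ℝ} (hN : 0 ≤ N)
    (h : a ^ 2 ≤ (1 - 2 * s) * N ^ 2) : a ≤ (1 - s) * N := by
  have hnonneg : 0 ≤ (1 - s) * N := by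
    rcases le_or_gt s 1 with hs | hs
    · exact mul_nonneg (sub_nonneg.2 hs) hN
    · have : N = 0 := by nlinarith [sq_nonneg a]
      simp [this]
  exact le_of_sq_le_sq (by nlinarith [sq_nonneg (s * N)]) hnonneg

theorem mann_mazya_convexity_lemma_general
    {H : Type*} [NormedAddCommGroup H] [InnerProductSpace ℝ H]
    (Tl : H →L[ℝ] H) (hTl : ‖Tl‖ ≤ 1) (z : H)
    (φbar : H) (hfix : φbar = Tl φbar + z)
    (d : ℕ → ℝ) (hd : ∀ k, d k ∈ Set.Icc (0 : ℝ) 1)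
    (φ : ℕ → H)
    (hrec : ∀ k, 1 ≤ k → φ (k + 1) = (1 - d k) • φ k + d k • (Tl (φ k) + z))
    (ε : ℝ) (hε : 0 < ε) (k₀ : ℕ) (hk₀ : 1 ≤ k₀)
    (hbig : ∀ k, k₀ ≤ k → ε ≤ ‖(Tl (φ k) + z) - φ k‖) :
    ∃ c > 0, ∀ k, k₀ ≤ k →
      ‖φ (k + 1) - φbar‖ ≤ (1 - c * d k * (1 - d k)) * ‖φ k - φbar‖ := by
  have hT := norm_add_sub_of_fixedPoint_le Tl hTl hfix
  have hweight : ∀ k, 0 ≤ d k * (1 - d k) := fun k => mul_nonneg (hd k).1 (sub_nonneg.2 (hd k).2)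
  have hstep : ∀ k, 1 ≤ k → ‖φ (k + 1) - φbar‖ ^ 2 ≤
      ‖φ k - φbar‖ ^ 2 - d k * (1 - d k) * ‖Tl (φ k) + z - φ k‖ ^ 2 := fun k hk =>
    hrec k hk ▸ sq_norm_one_sub_smul_add_smul_sub_le (hd k).1 (hT _)
  have hdist : AntitoneOn (fun k => ‖φ k - φbar‖) {k | 1 ≤ k} :=
    antitoneOn_nat_Ici_of_succ_le fun k hk => le_of_sq_le_sq
      (by linarith [hstep k hk, mul_nonneg (hweight k) (sq_nonneg ‖Tl (φ k) + z - φ k‖)]) (norm_nonneg _)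
  set M := ‖φ 1 - φbar‖
  have hM : 0 < M := by
    have htri := norm_sub_le_norm_sub_add_norm_sub (Tl (φ k₀) + z) φbar (φ k₀)
    rw [norm_sub_rev φbar] at htri
    linarith [hbig k₀ le_rfl, hT (φ k₀), hdist (le_refl 1) hk₀ hk₀]
  refine ⟨ε ^ 2 / (2 * M ^ 2), by positivity, fun k hk => ?_⟩
  have hcN : ε ^ 2 / (2 * M ^ 2) * ‖φ k - φbar‖ ^ 2 ≤ ε ^ 2 / 2 :=
    calc _ ≤ ε ^ 2 / (2 * M ^ 2) * M ^ 2 := by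
          gcongr; exact hdist (le_refl 1) (hk₀.trans hk) (hk₀.trans hk)
      _ = ε ^ 2 / 2 := by field_simp
  have hεk : ε ^ 2 ≤ ‖Tl (φ k) + z - φ k‖ ^ 2 := pow_le_pow_left₀ hε.le (hbig k hk) 2
  apply le_one_sub_mul_of_sq_le_one_sub_two_mul (norm_nonneg _)
  linarith [hstep k (hk₀.trans hk), mul_le_mul_of_nonneg_left hεk (hweight k),
    mul_le_mul_of_nonneg_left hcN (hweight k)]

/-- **Convexity lemma.** Let `H` be a real Hilbert space, `T_l` a bounded linear operator
with `‖T_l‖ ≤ 1`, `T x = T_l x + z` an affine operator with fixed point `φ̄`, and `(φ k)`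
the segmenting Mann iteration starting from `φ 1`. If `‖T (φ k) - φ k‖ ≥ ε` for all
`k ≥ k₀`, then there is `c > 0` with
`‖φ (k+1) - φ̄‖ ≤ (1 - c * d k * (1 - d k)) * ‖φ k - φ̄‖` for all `k ≥ k₀`. -/
theorem mann_mazya_convexity_lemma
    {H : Type*} [NormedAddCommGroup H] [InnerProductSpace ℝ H] [CompleteSpace H]
    (Tl : H →L[ℝ] H) (hTl : ‖Tl‖ ≤ 1) (z : H)
    (φbar : H) (hfix : φbar = Tl φbar + z)
    (d : ℕ → ℝ) (hd : ∀ k, d k ∈ Set.Icc (0 : ℝ) 1)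
    (φ : ℕ → H)
    (hrec : ∀ k, 1 ≤ k → φ (k + 1) = (1 - d k) • φ k + d k • (Tl (φ k) + z))
    (ε : ℝ) (hε : 0 < ε) (k₀ : ℕ) (hk₀ : 1 ≤ k₀)
    (hbig : ∀ k, k₀ ≤ k → ε ≤ ‖(Tl (φ k) + z) - φ k‖) :
    ∃ c > 0, ∀ k, k₀ ≤ k →
      ‖φ (k + 1) - φbar‖ ≤ (1 - c * d k * (1 - d k)) * ‖φ k - φbar‖ :=
  mann_mazya_convexity_lemma_general Tl hTl z φbar hfix d hd φ hrec ε hε k₀ hk₀ hbig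
end

section
/- Let H be a real Hilbert space and T_l : H → H a bounded linear operator with ‖T_l‖ ≤ 1 which is self-adjoint and positive (⟨T_l x, x⟩ ≥ 0 for all x ∈ H), and assume Ker(I − T_l) = {0}. Let z ∈ H, define T x := T_l x + z, and assume T has a fixed point φ̄ (which is then unique). Let (d_k) be a sequence with d_k ∈ [0,1] such that Σ_{k=1}^{∞} d_k (1 − d_k) diverges. Then for every φ₁ ∈ H, the segmenting Mann iteration φ_{k+1} := (1 − d_k) φ_k + d_k T(φ_k) converges strongly to φ̄, and likewise the sequence (T(φ_k)) converges strongly to φ̄. -/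
/-!
With `A := 1 - T_l`, the error `φ (n + 1) - φ̄` is `(1 - d n • A) ⋯ (1 - d 1 • A) (φ 1 - φ̄)`.
Symmetry, positivity and `‖T_l‖ ≤ 1` give `‖T_l x‖² ≤ ⟪T_l x, x⟫` by Cauchy–Schwarz, which is
equivalent to `‖A x‖² ≤ ⟪A x, x⟫`. Then a step `x ↦ x - t • A x` lowers `‖x‖²` by at least
`t (1 - t) ‖A x‖²`, and as `A` commutes with the steps, `‖A x_n‖` is nonincreasing along the
iteration. Hence `(∑_{k ≤ n} d_k (1 - d_k)) ‖A x_n‖² ≤ ‖x_1‖²`, so `A x_n → 0`: the iteration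
tends to `0` on the range of `A`. That range is dense because `A` is injective, and the steps are
contractions, so the convergence extends to all of `H`. Finally `T φ_k → T φ̄ = φ̄` by continuity.
-/

open Filter Finset
open scoped RealInnerProductSpace Topology

namespace ContinuousLinearMap

variable {H : Type*} [NormedAddCommGroup H] [InnerProductSpace ℝ H]

theorem IsPositive.norm_apply_sq_le {A : H →L[ℝ] H} (hA : A.IsPositive) (x : H) :
    ‖A x‖ ^ 2 ≤ ‖A‖ * ⟪A x, x⟫ := by
  -- Cauchy–Schwarz for the semi-inner product `⟪A ·, ·⟫` at the pair `(x, A x)`.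
  have hCS := LinearMap.BilinForm.apply_mul_apply_le_of_forall_zero_le
    ((innerₗ H).comp (A : H →ₗ[ℝ] H)) hA.inner_nonneg_left x (A x)
  simp only [LinearMap.comp_apply, innerₗ_apply_apply, coe_coe] at hCS
  rw [hA.inner_left_eq_inner_right (A x) x, real_inner_self_eq_norm_sq] at hCS
  have hAAx : ⟪A (A x), A x⟫ ≤ ‖A‖ * ‖A x‖ ^ 2 :=
    (real_inner_le_norm _ _).trans (by
      rw [sq, ← mul_assoc]; gcongr; exact A.le_opNorm _)
  rcases (sq_nonneg ‖A x‖).eq_or_lt with h0 | hpos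
  · rw [← h0]; exact mul_nonneg (norm_nonneg _) (hA.inner_nonneg_left x)
  · refine le_of_mul_le_mul_right ?_ hpos
    nlinarith [hA.inner_nonneg_left x]

end ContinuousLinearMap

section FirmlyNonexpansive

open ContinuousLinearMap

variable {H : Type*} [NormedAddCommGroup H] [InnerProductSpace ℝ H]

theorem norm_one_sub_apply_sq_le_inner {T : H →L[ℝ] H} (hT : ∀ x, ‖T x‖ ^ 2 ≤ ⟪T x, x⟫)
    (x : H) : ‖(1 - T) x‖ ^ 2 ≤ ⟪(1 - T) x, x⟫ := by
  rw [sub_apply, one_apply_eq_self, norm_sub_sq_real, inner_sub_left, real_inner_self_eq_norm_sq,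
    real_inner_comm]
  linarith [hT x]

variable {A : H →L[ℝ] H}

theorem norm_sub_smul_apply_sq_add_le (hA : ∀ x, ‖A x‖ ^ 2 ≤ ⟪A x, x⟫) {t : ℝ}
    (ht : t ∈ Set.Icc (0 : ℝ) 1) (x : H) :
    ‖x - t • A x‖ ^ 2 + t * (1 - t) * ‖A x‖ ^ 2 ≤ ‖x‖ ^ 2 := by
  rw [norm_sub_sq_real, real_inner_smul_right, norm_smul, mul_pow, Real.norm_eq_abs, sq_abs,
    real_inner_comm]
  nlinarith [hA x, ht.1, ht.2, sq_nonneg ‖A x‖]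

theorem denseRange_of_injective [CompleteSpace H] (hA : ∀ x, ‖A x‖ ^ 2 ≤ ⟪A x, x⟫)
    (hinj : ∀ x, A x = 0 → x = 0) : DenseRange A := by
  rw [DenseRange, ← coe_coe, ← LinearMap.coe_range, Submodule.dense_iff_topologicalClosure_eq_top,
    Submodule.topologicalClosure_eq_top_iff, Submodule.eq_bot_iff]
  intro y hy
  have hAy : ⟪A y, y⟫ = 0 := (Submodule.mem_orthogonal _ y).mp hy (A y) ⟨y, rfl⟩
  exact hinj y (norm_eq_zero.mp (pow_eq_zero_iff two_ne_zero |>.mp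
    (le_antisymm (hAy ▸ hA y) (sq_nonneg _))))

def mannProd (A : H →L[ℝ] H) (d : ℕ → ℝ) : ℕ → H →L[ℝ] H
  | 0 => 1
  | n + 1 => (1 - d (n + 1) • A) * mannProd A d n

theorem mannProd_succ_apply (d : ℕ → ℝ) (n : ℕ) (x : H) :
    mannProd A d (n + 1) x = mannProd A d n x - d (n + 1) • A (mannProd A d n x) := by
  simp [mannProd]

theorem mannProd_apply_comm (d : ℕ → ℝ) (n : ℕ) (x : H) :
    mannProd A d n (A x) = A (mannProd A d n x) := by
  induction n with
  | zero => rfl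
  | succ n ih => simp only [mannProd_succ_apply, ih, map_sub, map_smul]

theorem sum_mul_norm_apply_mannProd_sq_add_le (hA : ∀ x, ‖A x‖ ^ 2 ≤ ⟪A x, x⟫)
    {d : ℕ → ℝ} (hd : ∀ k, d k ∈ Set.Icc (0 : ℝ) 1) (x : H) (n : ℕ) :
    (∑ k ∈ Icc 1 n, d k * (1 - d k)) * ‖A (mannProd A d n x)‖ ^ 2 + ‖mannProd A d n x‖ ^ 2
      ≤ ‖x‖ ^ 2 := by
  induction n with
  | zero => simp [mannProd]
  | succ n ih =>
    rw [sum_Icc_succ_top (by omega), mannProd_succ_apply, map_sub, map_smul]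
    set y := mannProd A d n x
    have hS : 0 ≤ ∑ k ∈ Icc 1 n, d k * (1 - d k) :=
      sum_nonneg fun k _ => mul_nonneg (hd k).1 (sub_nonneg.2 (hd k).2)
    have hc : 0 ≤ d (n + 1) * (1 - d (n + 1)) := mul_nonneg (hd _).1 (sub_nonneg.2 (hd _).2)
    have hy := norm_sub_smul_apply_sq_add_le hA (hd (n + 1)) y
    -- `A` commutes with the step, so `‖A y‖` does not increase either.
    have hAy : ‖A y - d (n + 1) • A (A y)‖ ^ 2 ≤ ‖A y‖ ^ 2 := by
      nlinarith [norm_sub_smul_apply_sq_add_le hA (hd (n + 1)) (A y), sq_nonneg ‖A (A y)‖]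
    nlinarith [mul_le_mul_of_nonneg_left hAy hS, mul_le_mul_of_nonneg_left hAy hc]

theorem norm_mannProd_apply_le (hA : ∀ x, ‖A x‖ ^ 2 ≤ ⟪A x, x⟫)
    {d : ℕ → ℝ} (hd : ∀ k, d k ∈ Set.Icc (0 : ℝ) 1) (n : ℕ) (x : H) :
    ‖mannProd A d n x‖ ≤ ‖x‖ := by
  have hS : 0 ≤ ∑ k ∈ Icc 1 n, d k * (1 - d k) :=
    sum_nonneg fun k _ => mul_nonneg (hd k).1 (sub_nonneg.2 (hd k).2)
  have := sum_mul_norm_apply_mannProd_sq_add_le hA hd x n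
  exact (sq_le_sq₀ (norm_nonneg _) (norm_nonneg _)).1
    (by nlinarith [sq_nonneg ‖A (mannProd A d n x)‖])

theorem tendsto_apply_mannProd_apply_zero (hA : ∀ x, ‖A x‖ ^ 2 ≤ ⟪A x, x⟫)
    {d : ℕ → ℝ} (hd : ∀ k, d k ∈ Set.Icc (0 : ℝ) 1)
    (hdiv : Tendsto (fun n => ∑ k ∈ Icc 1 n, d k * (1 - d k)) atTop atTop) (x : H) :
    Tendsto (fun n => A (mannProd A d n x)) atTop (𝓝 0) := by
  have hsq : Tendsto (fun n => ‖A (mannProd A d n x)‖ ^ 2) atTop (𝓝 0) := by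
    refine squeeze_zero' (Eventually.of_forall fun n => sq_nonneg _) ?_
      (tendsto_const_nhds.div_atTop hdiv : Tendsto (fun n => ‖x‖ ^ 2 / _) _ _)
    filter_upwards [hdiv.eventually_gt_atTop 0] with n hn
    rw [le_div_iff₀ hn]
    nlinarith [sum_mul_norm_apply_mannProd_sq_add_le hA hd x n, sq_nonneg ‖mannProd A d n x‖]
  rw [tendsto_zero_iff_norm_tendsto_zero]
  simpa [Real.sqrt_sq (norm_nonneg _)] using hsq.sqrt

theorem tendsto_mannProd_apply_zero [CompleteSpace H] (hA : ∀ x, ‖A x‖ ^ 2 ≤ ⟪A x, x⟫)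
    (hinj : ∀ x, A x = 0 → x = 0) {d : ℕ → ℝ} (hd : ∀ k, d k ∈ Set.Icc (0 : ℝ) 1)
    (hdiv : Tendsto (fun n => ∑ k ∈ Icc 1 n, d k * (1 - d k)) atTop atTop) (x : H) :
    Tendsto (fun n => mannProd A d n x) atTop (𝓝 0) := by
  have hbound : ∃ C, ∀ n x, ‖mannProd A d n x‖ ≤ C * ‖x‖ :=
    ⟨1, fun n x => by simpa using norm_mannProd_apply_le hA hd n x⟩
  have hequi : Equicontinuous fun n => (mannProd A d n : H → H) :=
    ((NormedSpace.equicontinuous_TFAE fun n => mannProd A d n).out 3 1).1 hbound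
  have hclosed := hequi.isClosed_setOfPred_tendsto (l := atTop) (f := 0) continuous_const
  have hrange : Set.range A ⊆ {x | Tendsto (fun n => mannProd A d n x) atTop (𝓝 0)} := by
    rintro _ ⟨w, rfl⟩
    simpa only [Set.mem_ofPred_eq, mannProd_apply_comm] using
      tendsto_apply_mannProd_apply_zero hA hd hdiv w
  have hall := (denseRange_of_injective hA hinj).closure_range ▸ hclosed.closure_subset_iff.2 hrange
  exact hall (Set.mem_univ x)

end FirmlyNonexpansive

theorem mann_sub_fixedPoint_eq_mannProd {H : Type*} [NormedAddCommGroup H]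
    [InnerProductSpace ℝ H] {T : H →L[ℝ] H} {z p : H} (hp : p = T p + z) {d : ℕ → ℝ}
    {φ : ℕ → H} (hrec : ∀ k, 1 ≤ k → φ (k + 1) = (1 - d k) • φ k + d k • (T (φ k) + z))
    (n : ℕ) : φ (n + 1) - p = mannProd (1 - T) d n (φ 1 - p) := by
  obtain rfl : z = p - T p := eq_sub_of_add_eq' hp.symm
  induction n with
  | zero => rfl
  | succ n ih =>
    rw [mannProd_succ_apply, ← ih, hrec (n + 1) (by omega)]
    simp only [sub_apply, one_apply_eq_self, map_sub, sub_smul, one_smul, smul_sub, smul_add]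
    abel

/-- **Corollary 4.3 (convergence of the Mann–Maz'ya iteration).** Let `H` be a real
Hilbert space and `T_l` a self-adjoint positive bounded linear operator with `‖T_l‖ ≤ 1`
and `Ker (I - T_l) = {0}`. Let `T x = T_l x + z` have a fixed point `φ̄` and let `(d k)`
be a sequence in `[0,1]` with `∑ d k (1 - d k) = ∞`. Then for every `φ₁ ∈ H` both the
segmenting Mann iteration `(φ k)` and the sequence `(T (φ k))` converge strongly
to `φ̄`. -/
theorem mann_mazya_converges
    {H : Type*} [NormedAddCommGroup H] [InnerProductSpace ℝ H] [CompleteSpace H]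
    (Tl : H →L[ℝ] H) (hTl : ‖Tl‖ ≤ 1)
    (hsa : ∀ x y : H, inner ℝ (Tl x) y = (inner ℝ x (Tl y) : ℝ))
    (hpos : ∀ x : H, 0 ≤ (inner ℝ (Tl x) x : ℝ))
    (hker : ∀ x : H, Tl x = x → x = 0)
    (z : H) (φbar : H) (hfix : φbar = Tl φbar + z)
    (d : ℕ → ℝ) (hd : ∀ k, d k ∈ Set.Icc (0 : ℝ) 1)
    (hdiv : Tendsto (fun n => ∑ k ∈ Icc 1 n, d k * (1 - d k)) atTop atTop)
    (φ : ℕ → H)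
    (hrec : ∀ k, 1 ≤ k → φ (k + 1) = (1 - d k) • φ k + d k • (Tl (φ k) + z)) :
    Tendsto (fun k => φ k) atTop (nhds φbar) ∧
      Tendsto (fun k => Tl (φ k) + z) atTop (nhds φbar) := by
  have hTl_firm : ∀ x, ‖Tl x‖ ^ 2 ≤ ⟪Tl x, x⟫ := fun x =>
    (((Tl.isPositive_iff).2 ⟨hsa, hpos⟩).norm_apply_sq_le x).trans
      (mul_le_of_le_one_left (hpos x) hTl)
  have hA_firm : ∀ x, ‖(1 - Tl) x‖ ^ 2 ≤ ⟪(1 - Tl) x, x⟫ :=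
    norm_one_sub_apply_sq_le_inner hTl_firm
  have hA_inj : ∀ x, (1 - Tl) x = 0 → x = 0 := fun x hx =>
    hker x (sub_eq_zero.1 hx).symm
  have hφ : Tendsto φ atTop (𝓝 φbar) := by
    rw [← tendsto_add_atTop_iff_nat 1, ← tendsto_sub_nhds_zero_iff]
    exact (tendsto_mannProd_apply_zero hA_firm hA_inj hd hdiv (φ 1 - φbar)).congr fun n =>
      (mann_sub_fixedPoint_eq_mannProd hfix hrec n).symm
  refine ⟨hφ, ?_⟩
  have hTφ := ((Tl.continuous.tendsto φbar).comp hφ).add_const z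
  rwa [← hfix] at hTφ
end

section
/- Let H be a real Hilbert space and T_l : H → H a bounded linear operator with ‖T_l‖ ≤ 1 which is self-adjoint and positive (⟨T_l x, x⟩ ≥ 0 for all x ∈ H), with Ker(I − T_l) = {0}. Let (d_k) be a sequence with d_k ∈ [0,1] such that Σ_{k=1}^{∞} d_k (1 − d_k) diverges. Fix φ ∈ H and, for ψ ∈ H, let R_k^φ(ψ) denote the k-th element φ_k of the Mann–Maz'ya sequence for the operator x ↦ T_l x + ψ starting from φ, i.e. v₁ := φ, φ_{k+1} := T_l v_k + ψ, v_{k+1} := (1 − d_k) v_k + d_k φ_{k+1}. Let z ∈ H be such that the equation φ̄ = T_l φ̄ + z has a solution φ̄. Then there exist ε₀ > 0 and functions τ : (0,ε₀) → (0,∞) and k : (0,ε₀) → ℕ such that (i) τ(ε) → 0 as ε → 0, and (ii) for every ε ∈ (0,ε₀) and every z_ε ∈ H with ‖z_ε − z‖ ≤ ε one has ‖R_{k(ε)}^φ(z_ε) − φ̄‖ ≤ τ(ε). -/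
/-!
Write `B = 1 - T_l`, so that `0 ≤ B ≤ 1` and `B` is injective. For exact data the error
`e_k = v_k - φ̄` satisfies `e_{k+1} = (1 - d_k B) e_k`, and `0 ≤ B ≤ 1` gives
`‖e_{k+1}‖² ≤ ‖e_k‖² - 2 d_k (1 - d_k) ⟪B e_k, e_k⟫` with `⟪B e_k, e_k⟫` nonincreasing. Divergence
of `∑ d_k (1 - d_k)` therefore forces `⟪B e_k, e_k⟫ → 0`, hence `B e_k → 0`; as the error
propagators are contractions commuting with `B`, whose range is dense, `e_k → 0`.
The `k`-th iterate is `k`-Lipschitz in the data, so stopping at `k(ε) = ⌈ε^{-1/2}⌉` gives the error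
bound `‖φ_k(z) - φ̄‖ + k(ε) ε + ε`, which tends to `0`.
-/

open Filter Finset Topology
open scoped RealInnerProductSpace

namespace ContinuousLinearMap

variable {𝕜 E : Type*} [RCLike 𝕜] [NormedAddCommGroup E] [InnerProductSpace 𝕜 E]

theorem isPositive_one_sub_of_norm_le_one {T : E →L[𝕜] E} (hT : T.IsSymmetric)
    (hT₁ : ‖T‖ ≤ 1) : (1 - T).IsPositive := by
  refine ⟨isPositive_one.isSymmetric.sub hT, fun x => ?_⟩
  have hTx : RCLike.re (inner 𝕜 (T x) x) ≤ ‖x‖ ^ 2 :=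
    calc RCLike.re (inner 𝕜 (T x) x) ≤ ‖T x‖ * ‖x‖ :=
          (RCLike.re_le_norm _).trans (norm_inner_le_norm _ _)
      _ ≤ ‖x‖ * ‖x‖ := by gcongr; simpa using T.le_of_opNorm_le hT₁ x
      _ = ‖x‖ ^ 2 := (sq _).symm
  simpa [reApplyInnerSelf_apply, inner_sub_left, inner_self_eq_norm_sq] using hTx

theorem denseRange_of_isSymmetric_of_injective [CompleteSpace E] {T : E →L[𝕜] E}
    (hT : T.IsSymmetric) (hinj : Function.Injective T) : DenseRange T := by
  have hperp : (LinearMap.range (T : E →ₗ[𝕜] E))ᗮ = ⊥ := by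
    rw [hT.orthogonal_range, LinearMap.ker_eq_bot.mpr hinj]
  exact Submodule.dense_iff_topologicalClosure_eq_top.mpr
    (Submodule.topologicalClosure_eq_top_iff.mpr hperp)

end ContinuousLinearMap

section MannMazya

variable {E : Type*} [NormedAddCommGroup E] [NormedSpace ℝ E]

noncomputable def mannProduct (B : E →L[ℝ] E) (d : ℕ → ℝ) : ℕ → E →L[ℝ] E
  | 0 => 1
  | n + 1 => (1 - d (n + 1) • B) * mannProduct B d n

theorem mannProduct_succ_apply (B : E →L[ℝ] E) (d : ℕ → ℝ) (n : ℕ) (x : E) :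
    mannProduct B d (n + 1) x = mannProduct B d n x - d (n + 1) • B (mannProduct B d n x) := rfl

theorem commute_mannProduct (B : E →L[ℝ] E) (d : ℕ → ℝ) (n : ℕ) :
    Commute B (mannProduct B d n) := by
  induction n with
  | zero => exact Commute.one_right B
  | succ n ih =>
    exact ((Commute.one_right B).sub_right ((Commute.refl B).smul_right _)).mul_right ih

variable {T : E →L[ℝ] E} {d : ℕ → ℝ} {φ : E} {Φ V : E → ℕ → E}
  (hΦ1 : ∀ ψ, Φ ψ 1 = φ) (hV1 : ∀ ψ, V ψ 1 = φ)
  (hΦrec : ∀ ψ, ∀ k, 1 ≤ k → Φ ψ (k + 1) = T (V ψ k) + ψ)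
  (hVrec : ∀ ψ, ∀ k, 1 ≤ k → V ψ (k + 1) = (1 - d k) • V ψ k + d k • Φ ψ (k + 1))
include hV1 hΦrec hVrec

theorem mannMazya_sub_eq_mannProduct {ψ φbar : E} (hfix : φbar = T φbar + ψ) (n : ℕ) :
    V ψ (n + 1) - φbar = mannProduct (1 - T) d n (φ - φbar) := by
  have hψ : ψ = φbar - T φbar := eq_sub_of_add_eq' hfix.symm
  induction n with
  | zero => rw [hV1]; rfl
  | succ n ih =>
    rw [hVrec ψ _ (by omega), hΦrec ψ _ (by omega), mannProduct_succ_apply, ← ih, hψ]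
    simp only [sub_apply, one_apply_eq_self, map_sub]
    module

include hΦ1 in
theorem norm_mannMazya_sub_le (hT : ‖T‖ ≤ 1) (hd : ∀ k, d k ∈ Set.Icc (0 : ℝ) 1) (ψ ψ' : E)
    {k : ℕ} (hk : 1 ≤ k) :
    ‖Φ ψ k - Φ ψ' k‖ ≤ k * ‖ψ - ψ'‖ ∧ ‖V ψ k - V ψ' k‖ ≤ k * ‖ψ - ψ'‖ := by
  induction k, hk using Nat.le_induction with
  | base => simp [hΦ1, hV1]
  | succ k hk ih =>
    have hΦk : ‖Φ ψ (k + 1) - Φ ψ' (k + 1)‖ ≤ (k + 1 : ℕ) * ‖ψ - ψ'‖ :=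
      calc ‖Φ ψ (k + 1) - Φ ψ' (k + 1)‖ = ‖T (V ψ k - V ψ' k) + (ψ - ψ')‖ := by
            rw [hΦrec ψ k hk, hΦrec ψ' k hk, map_sub]; abel_nf
        _ ≤ ‖V ψ k - V ψ' k‖ + ‖ψ - ψ'‖ := by
            refine (norm_add_le _ _).trans ?_
            gcongr
            simpa using T.le_of_opNorm_le hT (V ψ k - V ψ' k)
        _ ≤ (k + 1 : ℕ) * ‖ψ - ψ'‖ := by push_cast; linarith [ih.2]
    refine ⟨hΦk, ?_⟩
    obtain ⟨hd₀, hd₁⟩ := hd k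
    calc ‖V ψ (k + 1) - V ψ' (k + 1)‖
        = ‖(1 - d k) • (V ψ k - V ψ' k) + d k • (Φ ψ (k + 1) - Φ ψ' (k + 1))‖ := by
          rw [hVrec ψ k hk, hVrec ψ' k hk, smul_sub, smul_sub]; abel_nf
      _ ≤ (1 - d k) * ‖V ψ k - V ψ' k‖ + d k * ‖Φ ψ (k + 1) - Φ ψ' (k + 1)‖ := by
          refine (norm_add_le _ _).trans_eq ?_
          rw [norm_smul_of_nonneg (by linarith), norm_smul_of_nonneg hd₀]
      _ ≤ (1 - d k) * ((k + 1 : ℕ) * ‖ψ - ψ'‖) + d k * ((k + 1 : ℕ) * ‖ψ - ψ'‖) := by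
          have hVk : ‖V ψ k - V ψ' k‖ ≤ (k + 1 : ℕ) * ‖ψ - ψ'‖ := ih.2.trans (by gcongr; simp)
          have : 0 ≤ 1 - d k := by linarith
          gcongr
      _ = (k + 1 : ℕ) * ‖ψ - ψ'‖ := by ring

end MannMazya

section MannProduct

variable {H : Type*} [NormedAddCommGroup H] [InnerProductSpace ℝ H] {B : H →L[ℝ] H}

theorem ContinuousLinearMap.inner_apply_self_le_norm_sq (hB₁ : B ≤ 1) (x : H) :
    ⟪B x, x⟫ ≤ ‖x‖ ^ 2 := by
  have h := ((ContinuousLinearMap.le_def B 1).mp hB₁).inner_nonneg_left x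
  simpa only [sub_apply, one_apply_eq_self, inner_sub_left, real_inner_self_eq_norm_sq,
    sub_nonneg] using h

theorem ContinuousLinearMap.norm_apply_sq_le_inner_apply_self (hB₀ : 0 ≤ B) (hB₁ : B ≤ 1)
    (x : H) : ‖B x‖ ^ 2 ≤ ⟪B x, x⟫ := by
  have hB := (ContinuousLinearMap.nonneg_iff_isPositive B).mp hB₀
  -- positivity of `B` at `x - B x`, and `B ≤ 1` at `B x`
  have h₀ := hB.inner_nonneg_left (x - B x)
  have h₁ := B.inner_apply_self_le_norm_sq hB₁ (B x)
  have hsym : ⟪B (B x), x⟫ = ⟪B x, B x⟫ := hB.inner_left_eq_inner_right (B x) x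
  simp only [map_sub, inner_sub_left, inner_sub_right, hsym, real_inner_self_eq_norm_sq] at h₀
  linarith

theorem ContinuousLinearMap.norm_sub_smul_apply_sq_le (hB₀ : 0 ≤ B) (hB₁ : B ≤ 1) (t : ℝ)
    (y : H) :
    ‖y - t • B y‖ ^ 2 ≤ ‖y‖ ^ 2 - 2 * (t * (1 - t)) * ⟪B y, y⟫ := by
  have hB := (ContinuousLinearMap.nonneg_iff_isPositive B).mp hB₀
  have h₀ := hB.inner_nonneg_left y
  have h₁ := B.norm_apply_sq_le_inner_apply_self hB₀ hB₁ y
  rw [norm_sub_sq_real, inner_smul_right, norm_smul, mul_pow, Real.norm_eq_abs, sq_abs,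
    real_inner_comm]
  nlinarith [mul_le_mul_of_nonneg_left h₁ (sq_nonneg t)]

theorem ContinuousLinearMap.inner_apply_sub_smul_le (hB₀ : 0 ≤ B) (hB₁ : B ≤ 1) {t : ℝ}
    (ht₀ : 0 ≤ t) (ht₂ : t ≤ 2) (y : H) :
    ⟪B (y - t • B y), y - t • B y⟫ ≤ ⟪B y, y⟫ := by
  have hB := (ContinuousLinearMap.nonneg_iff_isPositive B).mp hB₀
  have hsym : ⟪B (B y), y⟫ = ⟪B y, B y⟫ := hB.inner_left_eq_inner_right (B y) y
  have h₁ := B.inner_apply_self_le_norm_sq hB₁ (B y)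
  simp only [map_sub, map_smul, inner_sub_left, inner_sub_right, inner_smul_left,
    inner_smul_right, hsym, real_inner_self_eq_norm_sq, RCLike.conj_to_real]
  nlinarith [mul_le_mul_of_nonneg_left h₁ (sq_nonneg t),
    mul_nonneg (mul_nonneg ht₀ (sub_nonneg.mpr ht₂)) (sq_nonneg ‖B y‖)]

variable {d : ℕ → ℝ}

theorem sum_mul_one_sub_nonneg (hd : ∀ k, d k ∈ Set.Icc (0 : ℝ) 1) (s : Finset ℕ) :
    0 ≤ ∑ k ∈ s, d k * (1 - d k) :=
  sum_nonneg fun k _ => mul_nonneg (hd k).1 (sub_nonneg.mpr (hd k).2)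

theorem two_mul_inner_mannProduct_mul_sum_add_norm_sq_le (hB₀ : 0 ≤ B) (hB₁ : B ≤ 1)
    (hd : ∀ k, d k ∈ Set.Icc (0 : ℝ) 1) (n : ℕ) (x : H) :
    2 * ⟪B (mannProduct B d n x), mannProduct B d n x⟫ * ∑ k ∈ Icc 1 n, d k * (1 - d k)
      + ‖mannProduct B d n x‖ ^ 2 ≤ ‖x‖ ^ 2 := by
  induction n with
  | zero => simp [mannProduct]
  | succ n ih =>
    set y := mannProduct B d n x
    have hS := sum_mul_one_sub_nonneg hd (Icc 1 (n + 1))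
    have hnorm := B.norm_sub_smul_apply_sq_le hB₀ hB₁ (d (n + 1)) y
    have hinner := B.inner_apply_sub_smul_le hB₀ hB₁ (hd _).1 (by linarith [(hd (n + 1)).2]) y
    rw [sum_Icc_succ_top (by omega)] at hS ⊢
    rw [mannProduct_succ_apply]
    nlinarith [mul_le_mul_of_nonneg_right hinner hS]

theorem norm_mannProduct_apply_le (hB₀ : 0 ≤ B) (hB₁ : B ≤ 1)
    (hd : ∀ k, d k ∈ Set.Icc (0 : ℝ) 1) (n : ℕ) (x : H) : ‖mannProduct B d n x‖ ≤ ‖x‖ := by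
  have h := two_mul_inner_mannProduct_mul_sum_add_norm_sq_le hB₀ hB₁ hd n x
  have hβ := ((ContinuousLinearMap.nonneg_iff_isPositive B).mp hB₀).inner_nonneg_left
    (mannProduct B d n x)
  have hfirst := mul_nonneg (mul_nonneg zero_le_two hβ) (sum_mul_one_sub_nonneg hd (Icc 1 n))
  exact (sq_le_sq₀ (norm_nonneg _) (norm_nonneg _)).mp (by linarith)

theorem tendsto_inner_mannProduct_apply (hB₀ : 0 ≤ B) (hB₁ : B ≤ 1)
    (hd : ∀ k, d k ∈ Set.Icc (0 : ℝ) 1)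
    (hdiv : Tendsto (fun n => ∑ k ∈ Icc 1 n, d k * (1 - d k)) atTop atTop) (x : H) :
    Tendsto (fun n => ⟪B (mannProduct B d n x), mannProduct B d n x⟫) atTop (𝓝 0) := by
  have hbound : Tendsto (fun n => ‖x‖ ^ 2 / (2 * ∑ k ∈ Icc 1 n, d k * (1 - d k))) atTop (𝓝 0) :=
    tendsto_const_nhds.div_atTop (hdiv.const_mul_atTop two_pos)
  refine squeeze_zero' (Eventually.of_forall fun n =>
    ((ContinuousLinearMap.nonneg_iff_isPositive B).mp hB₀).inner_nonneg_left _) ?_ hbound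
  filter_upwards [hdiv.eventually_gt_atTop 0] with n hn
  rw [le_div_iff₀ (by positivity)]
  nlinarith [two_mul_inner_mannProduct_mul_sum_add_norm_sq_le hB₀ hB₁ hd n x,
    sq_nonneg ‖mannProduct B d n x‖]

theorem tendsto_apply_mannProduct_apply (hB₀ : 0 ≤ B) (hB₁ : B ≤ 1)
    (hd : ∀ k, d k ∈ Set.Icc (0 : ℝ) 1)
    (hdiv : Tendsto (fun n => ∑ k ∈ Icc 1 n, d k * (1 - d k)) atTop atTop) (x : H) :
    Tendsto (fun n => B (mannProduct B d n x)) atTop (𝓝 0) := by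
  have hsqrt := (tendsto_inner_mannProduct_apply hB₀ hB₁ hd hdiv x).sqrt
  rw [Real.sqrt_zero] at hsqrt
  exact squeeze_zero_norm (fun n => Real.le_sqrt_of_sq_le
    (B.norm_apply_sq_le_inner_apply_self hB₀ hB₁ _)) hsqrt

theorem tendsto_mannProduct_apply [CompleteSpace H] (hB₀ : 0 ≤ B) (hB₁ : B ≤ 1)
    (hinj : Function.Injective B) (hd : ∀ k, d k ∈ Set.Icc (0 : ℝ) 1)
    (hdiv : Tendsto (fun n => ∑ k ∈ Icc 1 n, d k * (1 - d k)) atTop atTop) (x : H) :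
    Tendsto (fun n => mannProduct B d n x) atTop (𝓝 0) := by
  have hbdd : ∃ C ≥ (0 : ℝ), ∀ n y, ‖mannProduct B d n y‖ ≤ C * ‖y‖ :=
    ⟨1, zero_le_one, fun n y => (norm_mannProduct_apply_le hB₀ hB₁ hd n y).trans_eq
      (one_mul _).symm⟩
  have hequi : Equicontinuous ((↑) ∘ mannProduct B d : ℕ → H → H) :=
    ((NormedSpace.equicontinuous_TFAE (mannProduct B d)).out 4 1).mp hbdd
  have hdense : DenseRange B := ContinuousLinearMap.denseRange_of_isSymmetric_of_injective
    ((ContinuousLinearMap.nonneg_iff_isPositive B).mp hB₀).isSymmetric hinj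
  refine hdense.induction_on x (hequi.isClosed_setOfPred_tendsto continuous_const) fun u => ?_
  exact (tendsto_apply_mannProduct_apply hB₀ hB₁ hd hdiv u).congr fun n =>
    DFunLike.congr_fun (commute_mannProduct B d n).eq u

end MannProduct

theorem tendsto_mannMazya {H : Type*} [NormedAddCommGroup H] [InnerProductSpace ℝ H]
    [CompleteSpace H] {T : H →L[ℝ] H} (hT₀ : 0 ≤ T) (hT₁ : T ≤ 1)
    (hker : ∀ x, T x = x → x = 0) {d : ℕ → ℝ} (hd : ∀ k, d k ∈ Set.Icc (0 : ℝ) 1)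
    (hdiv : Tendsto (fun n => ∑ k ∈ Icc 1 n, d k * (1 - d k)) atTop atTop)
    {φ ψ φbar : H} {Φ V : H → ℕ → H} (hV1 : ∀ ψ, V ψ 1 = φ)
    (hΦrec : ∀ ψ, ∀ k, 1 ≤ k → Φ ψ (k + 1) = T (V ψ k) + ψ)
    (hVrec : ∀ ψ, ∀ k, 1 ≤ k → V ψ (k + 1) = (1 - d k) • V ψ k + d k • Φ ψ (k + 1))
    (hfix : φbar = T φbar + ψ) :
    Tendsto (Φ ψ) atTop (𝓝 φbar) := by
  have hB₀ : 0 ≤ 1 - T := (ContinuousLinearMap.nonneg_iff_isPositive _).mpr hT₁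
  have hB₁ : 1 - T ≤ 1 := by
    rw [ContinuousLinearMap.le_def, sub_sub_cancel]
    exact (ContinuousLinearMap.nonneg_iff_isPositive T).mp hT₀
  have hinj : Function.Injective ⇑(1 - T) := (injective_iff_map_eq_zero _).mpr fun x hx =>
    hker x (sub_eq_zero.mp (by simpa only [sub_apply, one_apply_eq_self] using hx)).symm
  have herr : Tendsto (fun n => T (mannProduct (1 - T) d n (φ - φbar))) atTop (𝓝 0) := by
    have h := (T.continuous.tendsto 0).comp
      (tendsto_mannProduct_apply hB₀ hB₁ hinj hd hdiv (φ - φbar))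
    rwa [map_zero] at h
  rw [← tendsto_add_atTop_iff_nat 2, ← tendsto_sub_nhds_zero_iff]
  refine herr.congr fun n => ?_
  rw [← mannMazya_sub_eq_mannProduct hV1 hΦrec hVrec hfix, hΦrec ψ (n + 1) (by omega), map_sub]
  conv_rhs => rw [hfix]
  abel

theorem tendsto_natCeil_sqrt_inv : Tendsto (fun ε : ℝ => ⌈√ε⁻¹⌉₊) (𝓝[>] 0) atTop :=
  tendsto_nat_ceil_atTop.comp (Real.tendsto_sqrt_atTop.comp tendsto_inv_nhdsGT_zero)

theorem tendsto_natCeil_sqrt_inv_mul_self :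
    Tendsto (fun ε : ℝ => (⌈√ε⁻¹⌉₊ : ℝ) * ε) (𝓝[>] 0) (𝓝 0) := by
  have hbound : Tendsto (fun ε : ℝ => √ε + ε) (𝓝[>] 0) (𝓝 0) := by
    have hcont : Continuous fun ε : ℝ => √ε + ε := by fun_prop
    simpa using (hcont.tendsto 0).mono_left nhdsWithin_le_nhds
  refine tendsto_of_tendsto_of_tendsto_of_le_of_le' tendsto_const_nhds hbound ?_ ?_
  · filter_upwards [self_mem_nhdsWithin] with ε (hε : 0 < ε)
    positivity
  · filter_upwards [self_mem_nhdsWithin] with ε (hε : 0 < ε)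
    calc (⌈√ε⁻¹⌉₊ : ℝ) * ε ≤ (√ε⁻¹ + 1) * ε := by
          gcongr; exact (Nat.ceil_lt_add_one (Real.sqrt_nonneg _)).le
      _ = √ε + ε := by
          have hsqrt : 0 < √ε := Real.sqrt_pos.mpr hε
          rw [add_mul, one_mul, Real.sqrt_inv]
          nth_rw 2 [← Real.mul_self_sqrt hε.le]
          field_simp

theorem exists_regularization_of_tendsto {X Y : Type*} [PseudoMetricSpace X]
    [PseudoMetricSpace Y] (R : X → ℕ → Y) (z : X) (y : Y) (hconv : Tendsto (R z) atTop (𝓝 y))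
    (hstab : ∀ x k, 1 ≤ k → dist (R x k) (R z k) ≤ k * dist x z) :
    ∃ ε₀ > (0 : ℝ), ∃ τ : ℝ → ℝ, ∃ K : ℝ → ℕ,
      (∀ ε ∈ Set.Ioo (0 : ℝ) ε₀, 0 < τ ε) ∧
      Tendsto τ (𝓝[>] 0) (𝓝 0) ∧
      (∀ ε ∈ Set.Ioo (0 : ℝ) ε₀, ∀ x, dist x z ≤ ε → dist (R x (K ε)) y ≤ τ ε) := by
  set K : ℝ → ℕ := fun ε => ⌈√ε⁻¹⌉₊
  refine ⟨1, one_pos, fun ε => dist (R z (K ε)) y + K ε * ε + ε, K, ?_, ?_, ?_⟩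
  · intro ε hε
    have := hε.1
    positivity
  · have h := (tendsto_iff_dist_tendsto_zero.mp (hconv.comp tendsto_natCeil_sqrt_inv)).add
      (tendsto_natCeil_sqrt_inv_mul_self.add (tendsto_id.mono_left nhdsWithin_le_nhds))
    simpa [K, add_assoc] using h
  · intro ε hε x hx
    have hK : 1 ≤ K ε := Nat.one_le_iff_ne_zero.mpr
      (Nat.pos_iff_ne_zero.mp (Nat.ceil_pos.mpr (by have := hε.1; positivity)))
    calc dist (R x (K ε)) y ≤ dist (R x (K ε)) (R z (K ε)) + dist (R z (K ε)) y :=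
          dist_triangle _ _ _
      _ ≤ K ε * ε + dist (R z (K ε)) y := by
          gcongr
          exact (hstab x _ hK).trans (by gcongr)
      _ ≤ dist (R z (K ε)) y + K ε * ε + ε := by linarith [hε.1]

/-- **Theorem 4.6 (regularization property of the Mann–Maz'ya iteration).** Let `H` be a
real Hilbert space and `T_l` a self-adjoint positive bounded linear operator with
`‖T_l‖ ≤ 1` and `Ker (I - T_l) = {0}`. Let `(d k)` be a sequence in `[0,1]` with
`∑ d k (1 - d k) = ∞`. Fix `φ ∈ H` and for data `ψ ∈ H` let `Φ ψ k` be the `k`-th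
iterate of the Mann–Maz'ya algorithm `(φ, A, T_l + ψ)`. If `φ̄ = T_l φ̄ + z`, then there
exist `ε₀ > 0` and functions `τ : (0,ε₀) → ℝ⁺`, `K : (0,ε₀) → ℕ` with `τ(ε) → 0` as
`ε → 0` and `‖Φ z_ε (K ε) - φ̄‖ ≤ τ ε` whenever `‖z_ε - z‖ ≤ ε`. -/
theorem mann_mazya_regularization
    {H : Type*} [NormedAddCommGroup H] [InnerProductSpace ℝ H] [CompleteSpace H]
    (Tl : H →L[ℝ] H) (hTl : ‖Tl‖ ≤ 1)
    (hsa : ∀ x y : H, inner ℝ (Tl x) y = (inner ℝ x (Tl y) : ℝ))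
    (hpos : ∀ x : H, 0 ≤ (inner ℝ (Tl x) x : ℝ))
    (hker : ∀ x : H, Tl x = x → x = 0)
    (d : ℕ → ℝ) (hd : ∀ k, d k ∈ Set.Icc (0 : ℝ) 1)
    (hdiv : Tendsto (fun n => ∑ k ∈ Icc 1 n, d k * (1 - d k)) atTop atTop)
    (φ : H)
    (Φ V : H → ℕ → H)
    (hΦ1 : ∀ ψ, Φ ψ 1 = φ) (hV1 : ∀ ψ, V ψ 1 = φ)
    (hΦrec : ∀ ψ, ∀ k, 1 ≤ k → Φ ψ (k + 1) = Tl (V ψ k) + ψ)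
    (hVrec : ∀ ψ, ∀ k, 1 ≤ k → V ψ (k + 1) = (1 - d k) • V ψ k + d k • Φ ψ (k + 1))
    (z : H) (φbar : H) (hfix : φbar = Tl φbar + z) :
    ∃ ε₀ > (0 : ℝ), ∃ τ : ℝ → ℝ, ∃ K : ℝ → ℕ,
      (∀ ε ∈ Set.Ioo (0 : ℝ) ε₀, 0 < τ ε) ∧
      Tendsto τ (nhdsWithin 0 (Set.Ioi 0)) (nhds 0) ∧
      (∀ ε ∈ Set.Ioo (0 : ℝ) ε₀, ∀ zε : H, ‖zε - z‖ ≤ ε →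
        ‖Φ zε (K ε) - φbar‖ ≤ τ ε) := by
  have hT₀ : 0 ≤ Tl :=
    (ContinuousLinearMap.nonneg_iff_isPositive Tl).mpr ((Tl.isPositive_iff).mpr ⟨hsa, hpos⟩)
  have hT₁ : Tl ≤ 1 := ContinuousLinearMap.isPositive_one_sub_of_norm_le_one hsa hTl
  have hconv := tendsto_mannMazya hT₀ hT₁ hker hd hdiv hV1 hΦrec hVrec hfix
  have hstab : ∀ ψ k, 1 ≤ k → dist (Φ ψ k) (Φ z k) ≤ k * dist ψ z := fun ψ k hk => by
    simpa only [dist_eq_norm] using (norm_mannMazya_sub_le hΦ1 hV1 hΦrec hVrec hTl hd ψ z hk).1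
  obtain ⟨ε₀, hε₀, τ, K, hτ, hτlim, hK⟩ := exists_regularization_of_tendsto Φ z φbar hconv hstab
  exact ⟨ε₀, hε₀, τ, K, hτ, hτlim, by simpa only [dist_eq_norm] using hK⟩
end

section
/- Let H be a real Hilbert space and T_l : H → H a bounded linear operator with ‖T_l‖ ≤ 1 which is self-adjoint and positive (⟨T_l x, x⟩ ≥ 0 for all x ∈ H). Let z ∈ H, let φ̄ satisfy φ̄ = T_l φ̄ + z, and let (φ_k) be defined by φ_{k+1} := T_l φ_k + z from any φ₁ ∈ H. Then for every j ≥ 1, ‖φ̄ − φ_j‖² − ‖φ̄ − φ_{j+1}‖² ≥ ‖z − (I − T_l) φ_j‖². -/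
/-!
Write `e := φ̄ - φ_j`. Then `φ̄ - φ_{j+1} = T e` and the residual is `e - T e`, so the claim reads
`‖e - T e‖² ≤ ‖e‖² - ‖T e‖²`, i.e. `‖T e‖² ≤ ⟪T e, e⟫`. This holds for every positive contraction:
Cauchy–Schwarz for the semi-inner product `⟪T ·, ·⟫` gives
`‖T e‖⁴ = ⟪T e, T e⟫² ≤ ⟪T e, e⟫ ⟪T (T e), T e⟫ ≤ ⟪T e, e⟫ ‖T e‖²`.
-/

open scoped RealInnerProductSpace

namespace ContinuousLinearMap.IsPositive

variable {H : Type*} [NormedAddCommGroup H] [InnerProductSpace ℝ H] {T : H →L[ℝ] H}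

lemma inner_apply_sq_le (hT : T.IsPositive) (x y : H) :
    ⟪T x, y⟫ ^ 2 ≤ ⟪T x, x⟫ * ⟪T y, y⟫ := by
  have hsymm : ⟪T y, x⟫ = ⟪T x, y⟫ := by
    rw [hT.inner_left_eq_inner_right, real_inner_comm]
  have := LinearMap.BilinForm.apply_mul_apply_le_of_forall_zero_le
    ((innerₗ H).comp (T : H →ₗ[ℝ] H)) hT.inner_nonneg_left x y
  simp only [LinearMap.comp_apply, innerₗ_apply_apply, coe_coe, hsymm] at this
  rwa [sq]

lemma norm_apply_sq_le_inner (hT : T.IsPositive) (hT1 : ‖T‖ ≤ 1) (x : H) :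
    ‖T x‖ ^ 2 ≤ ⟪T x, x⟫ := by
  rcases (norm_nonneg (T x)).eq_or_lt with h0 | hpos
  · rw [← h0]
    simpa using hT.inner_nonneg_left x
  have hTT : ⟪T (T x), T x⟫ ≤ ‖T x‖ ^ 2 :=
    calc ⟪T (T x), T x⟫ ≤ ‖T (T x)‖ * ‖T x‖ := real_inner_le_norm _ _
      _ ≤ ‖T x‖ * ‖T x‖ := by gcongr; simpa using T.le_of_opNorm_le hT1 (T x)
      _ = ‖T x‖ ^ 2 := (sq _).symm
  have hquartic : (‖T x‖ ^ 2) * ‖T x‖ ^ 2 ≤ ⟪T x, x⟫ * ‖T x‖ ^ 2 :=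
    calc (‖T x‖ ^ 2) * ‖T x‖ ^ 2 = ⟪T x, T x⟫ ^ 2 := by rw [real_inner_self_eq_norm_sq]; ring
      _ ≤ ⟪T x, x⟫ * ⟪T (T x), T x⟫ := hT.inner_apply_sq_le x (T x)
      _ ≤ ⟪T x, x⟫ * ‖T x‖ ^ 2 := by gcongr; exact hT.inner_nonneg_left x
  exact le_of_mul_le_mul_right hquartic (by positivity)

lemma norm_sub_apply_sq_le (hT : T.IsPositive) (hT1 : ‖T‖ ≤ 1) (x : H) :
    ‖x - T x‖ ^ 2 ≤ ‖x‖ ^ 2 - ‖T x‖ ^ 2 := by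
  rw [norm_sub_sq_real, real_inner_comm]
  linarith [hT.norm_apply_sq_le_inner hT1 x]

end ContinuousLinearMap.IsPositive

theorem mazya_error_decay_ge_residual_sq_general
    {H : Type*} [NormedAddCommGroup H] [InnerProductSpace ℝ H]
    (Tl : H →L[ℝ] H) (hTl : ‖Tl‖ ≤ 1)
    (hsa : ∀ x y : H, inner ℝ (Tl x) y = (inner ℝ x (Tl y) : ℝ))
    (hpos : ∀ x : H, 0 ≤ (inner ℝ (Tl x) x : ℝ))
    (z : H) (φbar : H) (hfix : φbar = Tl φbar + z)
    (φ : ℕ → H) (hrec : ∀ k, 1 ≤ k → φ (k + 1) = Tl (φ k) + z) :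
    ∀ j, 1 ≤ j →
      ‖z - (φ j - Tl (φ j))‖ ^ 2 ≤ ‖φbar - φ j‖ ^ 2 - ‖φbar - φ (j + 1)‖ ^ 2 := by
  intro j hj
  have hz : z = φbar - Tl φbar := eq_sub_of_add_eq' hfix.symm
  have herror : φbar - φ (j + 1) = Tl (φbar - φ j) := by
    rw [hrec j hj, map_sub, hz]; abel
  have hresidual : z - (φ j - Tl (φ j)) = φbar - φ j - Tl (φbar - φ j) := by
    rw [map_sub, hz]; abel
  rw [herror, hresidual]
  exact ((Tl.isPositive_iff).2 ⟨hsa, hpos⟩).norm_sub_apply_sq_le hTl _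

/-- Monotonicity estimate for the Maz'ya iteration with a self-adjoint positive
non-expansive operator: the squared error decreases at least by the squared residual
at each step. -/
theorem mazya_error_decay_ge_residual_sq
    {H : Type*} [NormedAddCommGroup H] [InnerProductSpace ℝ H] [CompleteSpace H]
    (Tl : H →L[ℝ] H) (hTl : ‖Tl‖ ≤ 1)
    (hsa : ∀ x y : H, inner ℝ (Tl x) y = (inner ℝ x (Tl y) : ℝ))
    (hpos : ∀ x : H, 0 ≤ (inner ℝ (Tl x) x : ℝ))
    (z : H) (φbar : H) (hfix : φbar = Tl φbar + z)
    (φ : ℕ → H) (hrec : ∀ k, 1 ≤ k → φ (k + 1) = Tl (φ k) + z) :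
    ∀ j, 1 ≤ j →
      ‖z - (φ j - Tl (φ j))‖ ^ 2 ≤ ‖φbar - φ j‖ ^ 2 - ‖φbar - φ (j + 1)‖ ^ 2 :=
  mazya_error_decay_ge_residual_sq_general Tl hTl hsa hpos z φbar hfix φ hrec
end

section
/- Let H be a real Hilbert space and T_l : H → H a bounded linear operator with ‖T_l‖ ≤ 1 which is self-adjoint and positive (⟨T_l x, x⟩ ≥ 0 for all x ∈ H). Let z ∈ H, let φ̄ satisfy φ̄ = T_l φ̄ + z, and let (φ_k) be defined by φ_{k+1} := T_l φ_k + z from any φ₁ ∈ H. Then for every k ≥ 1, ‖z − (I − T_l) φ_k‖² ≤ k^{-1} ‖φ̄ − φ₁‖². -/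
/-!
The errors `u j = φ̄ - φ_{j+1}` satisfy `u (j+1) = T (u j)`, and the residual at step `k` is
`u (k-1) - T (u (k-1))`. Since `0 ≤ T ≤ 1`, Cauchy–Schwarz for the positive form `⟪T ·, ·⟫`
gives `‖T x‖² ≤ ⟪T x, x⟫`, i.e. `‖x - T x‖² ≤ ‖x‖² - ‖T x‖²`: the squared residuals telescope
against the squared errors, so their sum is at most `‖u 0‖²`. The residuals are also nonincreasing,
because `T` commutes with `1 - T` and is nonexpansive, so `k` times the last one is at most `‖u 0‖²`.
-/

open Finset
open scoped RealInnerProductSpace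

namespace ContinuousLinearMap

variable {E : Type*} [NormedAddCommGroup E] [InnerProductSpace ℝ E] {T : E →L[ℝ] E}

theorem IsPositive.real_inner_sq_le (hT : T.IsPositive) (x y : E) :
    ⟪T x, y⟫ ^ 2 ≤ ⟪T x, x⟫ * ⟪T y, y⟫ := by
  have hquad : ∀ t : ℝ, 0 ≤ ⟪T y, y⟫ * (t * t) + 2 * ⟪T x, y⟫ * t + ⟪T x, x⟫ := fun t => by
    have h := hT.inner_nonneg_left (x + t • y)
    rw [map_add, map_smul, inner_add_left, inner_add_right, inner_add_right, real_inner_smul_left,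
      real_inner_smul_right, real_inner_smul_left, real_inner_smul_right,
      hT.inner_left_eq_inner_right y x, real_inner_comm (T x) y] at h
    linarith
  have hdisc := discrim_le_zero hquad
  rw [discrim] at hdisc
  linarith

theorem real_inner_apply_self_le (hT : ‖T‖ ≤ 1) (x : E) : ⟪T x, x⟫ ≤ ‖x‖ ^ 2 :=
  calc ⟪T x, x⟫ ≤ ‖T x‖ * ‖x‖ := real_inner_le_norm _ _
    _ ≤ ‖x‖ * ‖x‖ := by gcongr; exact T.le_of_opNorm_le hT x |>.trans_eq (one_mul _)
    _ = ‖x‖ ^ 2 := (sq _).symm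

theorem IsPositive.norm_apply_sq_le_s10 (hT : T.IsPositive) (hT₁ : ‖T‖ ≤ 1) (x : E) :
    ‖T x‖ ^ 2 ≤ ⟪T x, x⟫ := by
  have hcs := hT.real_inner_sq_le x (T x)
  rw [real_inner_self_eq_norm_sq] at hcs
  have hbound := real_inner_apply_self_le hT₁ (T x)
  nlinarith [hT.inner_nonneg_left x, sq_nonneg ‖T x‖]

theorem IsPositive.norm_sub_apply_sq_le_s10 (hT : T.IsPositive) (hT₁ : ‖T‖ ≤ 1) (x : E) :
    ‖x - T x‖ ^ 2 ≤ ‖x‖ ^ 2 - ‖T x‖ ^ 2 := by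
  rw [norm_sub_sq_real, real_inner_comm]
  linarith [hT.norm_apply_sq_le_s10 hT₁ x]

theorem IsPositive.sum_norm_sub_apply_sq_le (hT : T.IsPositive) (hT₁ : ‖T‖ ≤ 1) {u : ℕ → E}
    (hu : ∀ j, u (j + 1) = T (u j)) (n : ℕ) :
    ∑ j ∈ range n, ‖u j - T (u j)‖ ^ 2 ≤ ‖u 0‖ ^ 2 - ‖u n‖ ^ 2 := by
  rw [← sum_range_sub' (fun j => ‖u j‖ ^ 2)]
  gcongr with j
  rw [hu j]
  exact hT.norm_sub_apply_sq_le_s10 hT₁ (u j)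

theorem antitone_norm_sub_apply (hT : ‖T‖ ≤ 1) {u : ℕ → E} (hu : ∀ j, u (j + 1) = T (u j)) :
    Antitone fun j => ‖u j - T (u j)‖ := by
  refine antitone_nat_of_succ_le fun j => ?_
  rw [hu j, ← map_sub]
  exact T.le_of_opNorm_le hT _ |>.trans_eq (one_mul _)

theorem IsPositive.succ_mul_norm_sub_apply_sq_le (hT : T.IsPositive) (hT₁ : ‖T‖ ≤ 1) {u : ℕ → E}
    (hu : ∀ j, u (j + 1) = T (u j)) (n : ℕ) :
    (n + 1) * ‖u n - T (u n)‖ ^ 2 ≤ ‖u 0‖ ^ 2 :=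
  calc (n + 1) * ‖u n - T (u n)‖ ^ 2
      = #(range (n + 1)) • ‖u n - T (u n)‖ ^ 2 := by simp
    _ ≤ ∑ j ∈ range (n + 1), ‖u j - T (u j)‖ ^ 2 := by
      refine card_nsmul_le_sum _ _ _ fun j hj => ?_
      have := antitone_norm_sub_apply hT₁ hu (Nat.lt_succ_iff.mp (mem_range.mp hj))
      gcongr
    _ ≤ ‖u 0‖ ^ 2 - ‖u (n + 1)‖ ^ 2 := hT.sum_norm_sub_apply_sq_le hT₁ hu _
    _ ≤ ‖u 0‖ ^ 2 := sub_le_self _ (sq_nonneg _)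

end ContinuousLinearMap

theorem mazya_residual_sq_le_inv_k_general
    {H : Type*} [NormedAddCommGroup H] [InnerProductSpace ℝ H]
    (Tl : H →L[ℝ] H) (hTl : ‖Tl‖ ≤ 1)
    (hsa : ∀ x y : H, inner ℝ (Tl x) y = (inner ℝ x (Tl y) : ℝ))
    (hpos : ∀ x : H, 0 ≤ (inner ℝ (Tl x) x : ℝ))
    (z : H) (φbar : H) (hfix : φbar = Tl φbar + z)
    (φ : ℕ → H) (hrec : ∀ k, 1 ≤ k → φ (k + 1) = Tl (φ k) + z) :
    ∀ k : ℕ, 1 ≤ k →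
      ‖z - (φ k - Tl (φ k))‖ ^ 2 ≤ (k : ℝ)⁻¹ * ‖φbar - φ 1‖ ^ 2 := by
  have hTpos : Tl.IsPositive := (Tl.isPositive_iff).2 ⟨hsa, hpos⟩
  have hz : z = φbar - Tl φbar := eq_sub_of_add_eq' hfix.symm
  set u : ℕ → H := fun j => φbar - φ (j + 1)
  have hu : ∀ j, u (j + 1) = Tl (u j) := fun j => by
    simp only [u, hrec (j + 1) (Nat.le_add_left 1 j), map_sub]
    conv_lhs => rw [hfix]
    abel
  rintro k hk
  obtain ⟨n, rfl⟩ := Nat.exists_eq_add_of_le' hk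
  have hres : z - (φ (n + 1) - Tl (φ (n + 1))) = u n - Tl (u n) := by
    simp only [u, hz, map_sub]
    abel
  rw [hres, Nat.cast_add_one, inv_mul_eq_div, le_div_iff₀' (by positivity)]
  exact hTpos.succ_mul_norm_sub_apply_sq_le hTl hu n

/-- Residual estimate for the Maz'ya iteration with a self-adjoint positive
non-expansive operator: `‖z - (I - T_l) φ_k‖² ≤ k⁻¹ ‖φ̄ - φ₁‖²` for every `k ≥ 1`. -/
theorem mazya_residual_sq_le_inv_k
    {H : Type*} [NormedAddCommGroup H] [InnerProductSpace ℝ H] [CompleteSpace H]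
    (Tl : H →L[ℝ] H) (hTl : ‖Tl‖ ≤ 1)
    (hsa : ∀ x y : H, inner ℝ (Tl x) y = (inner ℝ x (Tl y) : ℝ))
    (hpos : ∀ x : H, 0 ≤ (inner ℝ (Tl x) x : ℝ))
    (z : H) (φbar : H) (hfix : φbar = Tl φbar + z)
    (φ : ℕ → H) (hrec : ∀ k, 1 ≤ k → φ (k + 1) = Tl (φ k) + z) :
    ∀ k : ℕ, 1 ≤ k →
      ‖z - (φ k - Tl (φ k))‖ ^ 2 ≤ (k : ℝ)⁻¹ * ‖φbar - φ 1‖ ^ 2 :=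
  mazya_residual_sq_le_inv_k_general Tl hTl hsa hpos z φbar hfix φ hrec
end

section
/- (a) For every p > 0 there exists a constant C > 0 such that for all integers k ≥ 2 and all λ ∈ [0,1]: (1 − λ)^k f(λ) ≤ C (ln k)^{-p}, where f(λ) := (ln(e/λ))^{-p} for λ ∈ (0,1] and f(0) := 0. (b) For every p ∈ ℝ there exists a constant C > 0 such that for all integers k ≥ 2 and all λ ∈ (0,1]: (1 − λ)^k λ (ln(e/λ))^{-p} ≤ C k^{-1} (ln k)^{-p}. -/
open Real

/-- Key elementary bound: `y^q ≤ exp(q log(q/ε) - q + ε y)` for `q ≥ 0`, `ε > 0`, `y > 0`. -/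
private lemma aux_rpow_le_exp {q ε y : ℝ} (hq : 0 ≤ q) (hε : 0 < ε) (hy : 0 < y) :
    y ^ q ≤ Real.exp (q * Real.log (q / ε) - q + ε * y) := by
  rcases hq.eq_or_lt with h0 | hq
  · rw [← h0]
    simp only [Real.rpow_zero, zero_mul, zero_sub, neg_zero, zero_add]
    rw [Real.one_le_exp_iff]
    positivity
  · rw [Real.rpow_def_of_pos hy, Real.exp_le_exp]
    have h1 : Real.log (ε * y / q) ≤ ε * y / q - 1 :=
      Real.log_le_sub_one_of_pos (by positivity)
    have h2 : Real.log y = Real.log (ε * y / q) + Real.log (q / ε) := by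
      rw [← Real.log_mul (by positivity) (by positivity)]
      congr 1
      field_simp
    have h3 : q * Real.log (ε * y / q) ≤ ε * y - q := by
      have := mul_le_mul_of_nonneg_left h1 hq.le
      calc q * Real.log (ε * y / q) ≤ q * (ε * y / q - 1) := this
        _ = ε * y - q := by field_simp
    rw [h2]
    nlinarith

/-- `exp(-(εy)) * y^q ≤ exp(q log(q/ε) - q)`. -/
private lemma aux_exp_mul_rpow {q ε y : ℝ} (hq : 0 ≤ q) (hε : 0 < ε) (hy : 0 < y) :
    Real.exp (-(ε * y)) * y ^ q ≤ Real.exp (q * Real.log (q / ε) - q) := by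
  have h := aux_rpow_le_exp hq hε hy
  calc Real.exp (-(ε * y)) * y ^ q
      ≤ Real.exp (-(ε * y)) * Real.exp (q * Real.log (q / ε) - q + ε * y) := by
        exact mul_le_mul_of_nonneg_left h (Real.exp_pos _).le
    _ = Real.exp (q * Real.log (q / ε) - q) := by rw [← Real.exp_add]; ring_nf

private lemma aux_pow_le_exp {l : ℝ} (h0 : 0 ≤ l) (h1 : l ≤ 1) (k : ℕ) :
    (1 - l) ^ k ≤ Real.exp (-((k : ℝ) * l)) := by
  have h2 : 1 - l ≤ Real.exp (-l) := by
    have := Real.add_one_le_exp (-l); linarith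
  calc (1 - l) ^ k ≤ Real.exp (-l) ^ k := pow_le_pow_left₀ (by linarith) h2 k
    _ = Real.exp ((k : ℝ) * (-l)) := (Real.exp_nat_mul _ k).symm
    _ = Real.exp (-((k : ℝ) * l)) := by ring_nf

private lemma aux_logk {k : ℕ} (hk : 2 ≤ k) :
    0 < Real.log k ∧ 1 + Real.log k ≤ 3 * Real.log k := by
  have h2 : (2 : ℝ) ≤ k := by exact_mod_cast hk
  have hl2 : (0.6931471803 : ℝ) < Real.log 2 := Real.log_two_gt_d9
  have hmono : Real.log 2 ≤ Real.log k := Real.log_le_log (by norm_num) h2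
  constructor <;> nlinarith

private lemma aux_key {k : ℕ} {l : ℝ} (hl0 : 0 < l) (hl1 : l ≤ 1)
    (hkl : 1 ≤ (k : ℝ) * l) : Real.log k ≤ (k : ℝ) * l * (1 - Real.log l) := by
  have hk0 : (0 : ℝ) < k := by
    rcases Nat.eq_zero_or_pos k with h | h
    · simp [h] at hkl; nlinarith
    · exact_mod_cast h
  have h1 : Real.log ((k : ℝ) * l) ≤ (k : ℝ) * l - 1 := Real.log_le_sub_one_of_pos (by positivity)
  have h2 : Real.log ((k : ℝ) * l) = Real.log k + Real.log l := Real.log_mul (ne_of_gt hk0) (ne_of_gt hl0)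
  have h3 : Real.log l ≤ 0 := Real.log_nonpos hl0.le hl1
  nlinarith

theorem partA : ∀ p : ℝ, 0 < p → ∃ C > (0 : ℝ), ∀ k : ℕ, 2 ≤ k → ∀ l ∈ Set.Icc (0 : ℝ) 1,
      (1 - l) ^ k * (if l = 0 then 0 else (Real.log (Real.exp 1 / l)) ^ (-p))
        ≤ C * (Real.log k) ^ (-p) := by
  intro p hp
  set E := Real.exp (p * Real.log (p / 1) - p) with hE
  have hEpos : 0 < E := Real.exp_pos _
  refine ⟨E + 1, by positivity, ?_⟩
  intro k hk l hl
  obtain ⟨hl0, hl1⟩ := hl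
  obtain ⟨hlogk, hlogk3⟩ := aux_logk hk
  have hRpos : (0:ℝ) < Real.log k ^ (-p) := Real.rpow_pos_of_pos hlogk _
  rcases eq_or_lt_of_le hl0 with h0 | hl0
  · rw [if_pos h0.symm, mul_zero]
    positivity
  · rw [if_neg (ne_of_gt hl0)]
    have hel : Real.log (Real.exp 1 / l) = 1 - Real.log l := by
      rw [Real.log_div (Real.exp_ne_zero 1) (ne_of_gt hl0), Real.log_exp]
    rw [hel]
    have hll : Real.log l ≤ 0 := Real.log_nonpos hl0.le hl1
    have h1l : (0:ℝ) < 1 - Real.log l := by linarith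
    have hk0 : (0:ℝ) < k := by
      have : (2:ℝ) ≤ k := by exact_mod_cast hk
      linarith
    rcases le_or_gt ((k:ℝ) * l) 1 with hc | hc
    · have hlog : Real.log k ≤ 1 - Real.log l := by
        have h := Real.log_nonpos (by positivity) hc
        rw [Real.log_mul (ne_of_gt hk0) (ne_of_gt hl0)] at h
        linarith
      have h1 : (1 - Real.log l) ^ (-p) ≤ Real.log k ^ (-p) :=
        Real.rpow_le_rpow_of_nonpos hlogk hlog (by linarith)
      have h2 : (1 - l) ^ k ≤ 1 := pow_le_one₀ (by linarith) (by linarith)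
      calc (1-l)^k * (1 - Real.log l) ^ (-p) ≤ 1 * (Real.log k ^ (-p)) := by
            apply mul_le_mul h2 h1 (Real.rpow_pos_of_pos h1l _).le zero_le_one
        _ ≤ (E+1) * Real.log k ^ (-p) := by nlinarith
    · have hkl0 : (0:ℝ) < (k:ℝ)*l := by positivity
      have hexp : (1-l)^k ≤ Real.exp (-((k:ℝ)*l)) := aux_pow_le_exp hl0.le hl1 k
      have haux : Real.exp (-((k:ℝ)*l)) * ((k:ℝ)*l) ^ p ≤ E := by
        have := aux_exp_mul_rpow hp.le one_pos hkl0
        rwa [one_mul] at this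
      have hxp : (0:ℝ) < ((k:ℝ)*l) ^ p := Real.rpow_pos_of_pos hkl0 _
      have hexp2 : Real.exp (-((k:ℝ)*l)) ≤ E * ((k:ℝ)*l) ^ (-p) := by
        rw [Real.rpow_neg hkl0.le, mul_comm E, inv_mul_eq_div, le_div_iff₀ hxp]
        exact haux
      have hmul : ((k:ℝ)*l) ^ (-p) * (1 - Real.log l) ^ (-p)
          = (((k:ℝ)*l) * (1 - Real.log l)) ^ (-p) := (Real.mul_rpow hkl0.le h1l.le).symm
      have hmono : (((k:ℝ)*l) * (1 - Real.log l)) ^ (-p) ≤ Real.log k ^ (-p) :=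
        Real.rpow_le_rpow_of_nonpos hlogk (aux_key hl0 hl1 hc.le) (by linarith)
      calc (1-l)^k * (1 - Real.log l)^(-p)
          ≤ Real.exp (-((k:ℝ)*l)) * (1 - Real.log l)^(-p) :=
            mul_le_mul_of_nonneg_right hexp (Real.rpow_pos_of_pos h1l _).le
        _ ≤ (E * ((k:ℝ)*l)^(-p)) * (1 - Real.log l)^(-p) :=
            mul_le_mul_of_nonneg_right hexp2 (Real.rpow_pos_of_pos h1l _).le
        _ = E * (((k:ℝ)*l) * (1 - Real.log l)) ^ (-p) := by rw [mul_assoc, hmul]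
        _ ≤ E * Real.log k ^ (-p) := mul_le_mul_of_nonneg_left hmono hEpos.le
        _ ≤ (E+1) * Real.log k ^ (-p) := by nlinarith

set_option maxHeartbeats 1600000 in
theorem partB : ∀ p : ℝ, ∃ C > (0 : ℝ), ∀ k : ℕ, 2 ≤ k → ∀ l ∈ Set.Ioc (0 : ℝ) 1,
      (1 - l) ^ k * l * (Real.log (Real.exp 1 / l)) ^ (-p)
        ≤ C * (k : ℝ)⁻¹ * (Real.log k) ^ (-p) := by
  intro p
  rcases le_or_gt 0 p with hp | hp
  · -- case p ≥ 0
    set E := Real.exp (p * Real.log (p / (1/2)) - p) with hE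
    have hEpos : 0 < E := Real.exp_pos _
    refine ⟨2 * E + 1, by positivity, ?_⟩
    intro k hk l hl
    obtain ⟨hl0, hl1⟩ := hl
    obtain ⟨hlogk, hlogk3⟩ := aux_logk hk
    have hRpos : (0:ℝ) < Real.log k ^ (-p) := Real.rpow_pos_of_pos hlogk _
    have hk0 : (0:ℝ) < k := by
      have : (2:ℝ) ≤ k := by exact_mod_cast hk
      linarith
    have hel : Real.log (Real.exp 1 / l) = 1 - Real.log l := by
      rw [Real.log_div (Real.exp_ne_zero 1) (ne_of_gt hl0), Real.log_exp]
    rw [hel]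
    have hll : Real.log l ≤ 0 := Real.log_nonpos hl0.le hl1
    have h1l : (0:ℝ) < 1 - Real.log l := by linarith
    have hBpos : (0:ℝ) < (1 - Real.log l) ^ (-p) := Real.rpow_pos_of_pos h1l _
    rcases le_or_gt ((k:ℝ) * l) 1 with hc | hc
    · -- small l : k*l ≤ 1
      have hlog : Real.log k ≤ 1 - Real.log l := by
        have h := Real.log_nonpos (by positivity) hc
        rw [Real.log_mul (ne_of_gt hk0) (ne_of_gt hl0)] at h
        linarith
      have h1 : (1 - Real.log l) ^ (-p) ≤ Real.log k ^ (-p) :=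
        Real.rpow_le_rpow_of_nonpos hlogk hlog (by linarith)
      have h2 : (1 - l) ^ k ≤ 1 := pow_le_one₀ (by linarith) (by linarith)
      have hlk : l ≤ (k:ℝ)⁻¹ := by
        rw [inv_eq_one_div, le_div_iff₀ hk0]
        nlinarith
      calc (1-l)^k * l * (1 - Real.log l) ^ (-p)
          ≤ 1 * (k:ℝ)⁻¹ * Real.log k ^ (-p) := by
            apply mul_le_mul (mul_le_mul h2 hlk hl0.le zero_le_one) h1 hBpos.le (by positivity)
        _ ≤ (2*E+1) * (k:ℝ)⁻¹ * Real.log k ^ (-p) := by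
            have : (0:ℝ) ≤ (k:ℝ)⁻¹ * Real.log k ^ (-p) := by positivity
            nlinarith
    · -- large l : k*l > 1
      set x := (k:ℝ) * l with hxdef
      have hx0 : (0:ℝ) < x := by positivity
      have hl_eq : l = x / k := by field_simp; rw [hxdef]; ring
      have hexp : (1-l)^k ≤ Real.exp (-x) := aux_pow_le_exp hl0.le hl1 k
      have hb1 : Real.exp (-(x/2)) * x ≤ 2 := by
        have h1 := Real.add_one_le_exp (x/2)
        have h2 : Real.exp (-(x/2)) = (Real.exp (x/2))⁻¹ := Real.exp_neg _
        have h3 := Real.exp_pos (x/2)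
        rw [h2]
        rw [inv_mul_le_iff₀ h3]
        nlinarith
      have haux : Real.exp (-(1/2 * x)) * x ^ p ≤ E := aux_exp_mul_rpow hp (by norm_num) hx0
      have hxp : (0:ℝ) < x ^ p := Real.rpow_pos_of_pos hx0 _
      have hb2 : Real.exp (-(x/2)) ≤ E * x ^ (-p) := by
        rw [Real.rpow_neg hx0.le, mul_comm E, inv_mul_eq_div, le_div_iff₀ hxp]
        have : -(x/2) = -(1/2*x) := by ring
        rw [this]
        exact haux
      have hmul : x ^ (-p) * (1 - Real.log l) ^ (-p)
          = (x * (1 - Real.log l)) ^ (-p) := (Real.mul_rpow hx0.le h1l.le).symm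
      have hmono : (x * (1 - Real.log l)) ^ (-p) ≤ Real.log k ^ (-p) :=
        Real.rpow_le_rpow_of_nonpos hlogk (aux_key hl0 hl1 hc.le) (by linarith)
      have hb2' : Real.exp (-(x/2)) * (1 - Real.log l) ^ (-p) ≤ E * Real.log k ^ (-p) := by
        calc Real.exp (-(x/2)) * (1 - Real.log l) ^ (-p)
            ≤ (E * x ^ (-p)) * (1 - Real.log l) ^ (-p) :=
              mul_le_mul_of_nonneg_right hb2 hBpos.le
          _ = E * (x * (1 - Real.log l)) ^ (-p) := by rw [mul_assoc, hmul]
          _ ≤ E * Real.log k ^ (-p) := mul_le_mul_of_nonneg_left hmono hEpos.le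
      have hxeq : Real.exp (-x) = Real.exp (-(x/2)) * Real.exp (-(x/2)) := by
        rw [← Real.exp_add]; ring_nf
      calc (1-l)^k * l * (1 - Real.log l) ^ (-p)
          ≤ Real.exp (-x) * l * (1 - Real.log l) ^ (-p) := by
            apply mul_le_mul_of_nonneg_right
              (mul_le_mul_of_nonneg_right hexp hl0.le) hBpos.le
        _ = (k:ℝ)⁻¹ * ((Real.exp (-(x/2)) * x) * (Real.exp (-(x/2)) * (1 - Real.log l) ^ (-p))) := by
            rw [hxeq, hl_eq]
            field_simp
        _ ≤ (k:ℝ)⁻¹ * (2 * (E * Real.log k ^ (-p))) := by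
            apply mul_le_mul_of_nonneg_left _ (by positivity)
            apply mul_le_mul hb1 hb2' (by positivity) (by norm_num)
        _ = (2*E) * (k:ℝ)⁻¹ * Real.log k ^ (-p) := by ring
        _ ≤ (2*E+1) * (k:ℝ)⁻¹ * Real.log k ^ (-p) := by
            have : (0:ℝ) ≤ (k:ℝ)⁻¹ * Real.log k ^ (-p) := by positivity
            nlinarith
  · -- case p < 0
    set q := -p with hqdef
    have hq : 0 < q := by simp [hqdef]; linarith
    set E := Real.exp (q * Real.log (q / 1) - q) with hE
    have hEpos : 0 < E := Real.exp_pos _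
    have h3q : (0:ℝ) < (3:ℝ) ^ q := Real.rpow_pos_of_pos (by norm_num) _
    refine ⟨(Real.exp 1 * E + 1) * (3:ℝ) ^ q, by positivity, ?_⟩
    intro k hk l hl
    obtain ⟨hl0, hl1⟩ := hl
    obtain ⟨hlogk, hlogk3⟩ := aux_logk hk
    have hRpos : (0:ℝ) < Real.log k ^ q := Real.rpow_pos_of_pos hlogk _
    have hk0 : (0:ℝ) < k := by
      have : (2:ℝ) ≤ k := by exact_mod_cast hk
      linarith
    have hel : Real.log (Real.exp 1 / l) = 1 - Real.log l := by
      rw [Real.log_div (Real.exp_ne_zero 1) (ne_of_gt hl0), Real.log_exp]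
    rw [hel]
    have hll : Real.log l ≤ 0 := Real.log_nonpos hl0.le hl1
    have h1l : (0:ℝ) < 1 - Real.log l := by linarith
    have h13 : (1 + Real.log k) ^ q ≤ (3:ℝ) ^ q * Real.log k ^ q := by
      rw [← Real.mul_rpow (by norm_num) hlogk.le]
      exact Real.rpow_le_rpow (by linarith) hlogk3 hq.le
    have h2 : (1 - l) ^ k ≤ 1 := pow_le_one₀ (by linarith) (by linarith)
    rcases le_or_gt ((k:ℝ) * l) 1 with hc | hc
    · -- small l : t = k*l ≤ 1
      set t := (k:ℝ) * l with htdef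
      have ht0 : (0:ℝ) < t := by positivity
      have hl_eq : l = t / k := by field_simp; rw [htdef]; ring
      have hlt : Real.log l = Real.log t - Real.log k := by
        rw [hl_eq, Real.log_div (ne_of_gt ht0) (ne_of_gt hk0)]
      have hlogt : Real.log t ≤ 0 := Real.log_nonpos ht0.le hc
      have h1t : (0:ℝ) < 1 - Real.log t := by linarith
      have hA : 1 - Real.log l ≤ (1 + Real.log k) * (1 - Real.log t) := by
        rw [hlt]; nlinarith
      have hAq : (1 - Real.log l) ^ q ≤ (1 + Real.log k) ^ q * (1 - Real.log t) ^ q := by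
        rw [← Real.mul_rpow (by linarith) h1t.le]
        exact Real.rpow_le_rpow h1l.le hA hq.le
      have htb : t * (1 - Real.log t) ^ q ≤ Real.exp 1 * E := by
        have h := aux_exp_mul_rpow hq.le one_pos h1t
        have heq : Real.exp (-(1 * (1 - Real.log t))) = t / Real.exp 1 := by
          rw [one_mul, neg_sub, Real.exp_sub, Real.exp_log ht0]
        rw [heq] at h
        have he1 := Real.exp_pos 1
        have hY : (0:ℝ) ≤ (1 - Real.log t) ^ q := (Real.rpow_pos_of_pos h1t _).le
        rw [div_mul_eq_mul_div, div_le_iff₀ he1] at h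
        linarith [h]
      calc (1-l)^k * l * (1 - Real.log l) ^ q
          ≤ 1 * l * ((1 + Real.log k) ^ q * (1 - Real.log t) ^ q) := by
            apply mul_le_mul (mul_le_mul h2 le_rfl hl0.le zero_le_one) hAq
              (Real.rpow_pos_of_pos h1l _).le (by positivity)
        _ = (k:ℝ)⁻¹ * ((1 + Real.log k) ^ q * (t * (1 - Real.log t) ^ q)) := by
            rw [hl_eq]; field_simp
        _ ≤ (k:ℝ)⁻¹ * (((3:ℝ) ^ q * Real.log k ^ q) * (Real.exp 1 * E)) := by
            apply mul_le_mul_of_nonneg_left _ (by positivity)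
            apply mul_le_mul h13 htb (by positivity) (by positivity)
        _ = ((Real.exp 1 * E) * (3:ℝ)^q) * (k:ℝ)⁻¹ * Real.log k ^ q := by ring
        _ ≤ (Real.exp 1 * E + 1) * (3:ℝ)^q * (k:ℝ)⁻¹ * Real.log k ^ q := by
            have h1 : (Real.exp 1 * E) * (3:ℝ)^q ≤ (Real.exp 1 * E + 1) * (3:ℝ)^q := by
              nlinarith [h3q]
            have h2 : (0:ℝ) ≤ (k:ℝ)⁻¹ * Real.log k ^ q := by positivity
            calc ((Real.exp 1 * E) * (3:ℝ)^q) * (k:ℝ)⁻¹ * Real.log k ^ q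
                = ((Real.exp 1 * E) * (3:ℝ)^q) * ((k:ℝ)⁻¹ * Real.log k ^ q) := by ring
              _ ≤ ((Real.exp 1 * E + 1) * (3:ℝ)^q) * ((k:ℝ)⁻¹ * Real.log k ^ q) :=
                  mul_le_mul_of_nonneg_right h1 h2
              _ = (Real.exp 1 * E + 1) * (3:ℝ)^q * (k:ℝ)⁻¹ * Real.log k ^ q := by ring
    · -- large l : k*l > 1
      set x := (k:ℝ) * l with hxdef
      have hx0 : (0:ℝ) < x := by positivity
      have hl_eq : l = x / k := by field_simp; rw [hxdef]; ring
      have hexp : (1-l)^k ≤ Real.exp (-x) := aux_pow_le_exp hl0.le hl1 k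
      have hlgl : 1 - Real.log l ≤ 1 + Real.log k := by
        have h := Real.log_nonneg hc.le
        rw [Real.log_mul (ne_of_gt hk0) (ne_of_gt hl0)] at h
        linarith
      have hB : (1 - Real.log l) ^ q ≤ (3:ℝ) ^ q * Real.log k ^ q := by
        calc (1 - Real.log l) ^ q ≤ (1 + Real.log k) ^ q :=
              Real.rpow_le_rpow h1l.le hlgl hq.le
          _ ≤ (3:ℝ) ^ q * Real.log k ^ q := h13
      have hxe : Real.exp (-x) * x ≤ 1 := by
        have h1 := Real.add_one_le_exp x
        have h2 : Real.exp (-x) = (Real.exp x)⁻¹ := Real.exp_neg _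
        have h3 := Real.exp_pos x
        rw [h2, inv_mul_le_iff₀ h3]
        nlinarith
      calc (1-l)^k * l * (1 - Real.log l) ^ q
          ≤ Real.exp (-x) * l * ((3:ℝ)^q * Real.log k ^ q) := by
            apply mul_le_mul (mul_le_mul_of_nonneg_right hexp hl0.le) hB
              (Real.rpow_pos_of_pos h1l _).le (by positivity)
        _ = (Real.exp (-x) * x) * ((k:ℝ)⁻¹ * ((3:ℝ)^q * Real.log k ^ q)) := by
            rw [hl_eq]; field_simp
        _ ≤ 1 * ((k:ℝ)⁻¹ * ((3:ℝ)^q * Real.log k ^ q)) :=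
            mul_le_mul_of_nonneg_right hxe (by positivity)
        _ = (3:ℝ)^q * (k:ℝ)⁻¹ * Real.log k ^ q := by ring
        _ ≤ (Real.exp 1 * E + 1) * (3:ℝ)^q * (k:ℝ)⁻¹ * Real.log k ^ q := by
            have h1 : (3:ℝ)^q ≤ (Real.exp 1 * E + 1) * (3:ℝ)^q := by
              nlinarith [mul_nonneg (mul_pos (Real.exp_pos 1) hEpos).le h3q.le]
            have h2 : (0:ℝ) ≤ (k:ℝ)⁻¹ * Real.log k ^ q := by positivity
            calc (3:ℝ)^q * (k:ℝ)⁻¹ * Real.log k ^ q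
                = (3:ℝ)^q * ((k:ℝ)⁻¹ * Real.log k ^ q) := by ring
              _ ≤ ((Real.exp 1 * E + 1) * (3:ℝ)^q) * ((k:ℝ)⁻¹ * Real.log k ^ q) :=
                  mul_le_mul_of_nonneg_right h1 h2
              _ = (Real.exp 1 * E + 1) * (3:ℝ)^q * (k:ℝ)⁻¹ * Real.log k ^ q := by ring

/-- **Lemma A.1.** (a) For every `p > 0` there is `C > 0` such that for all integers
`k ≥ 2` and all `λ ∈ [0,1]`: `(1 - λ)^k f(λ) ≤ C (ln k)^{-p}`, where
`f(λ) = (ln(e/λ))^{-p}` for `λ ∈ (0,1]` and `f(0) = 0`.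
(b) For every `p ∈ ℝ` there is `C > 0` such that for all integers `k ≥ 2` and all
`λ ∈ (0,1]`: `(1 - λ)^k λ (ln(e/λ))^{-p} ≤ C k⁻¹ (ln k)^{-p}`. -/
theorem log_decay_bounds :
    (∀ p : ℝ, 0 < p → ∃ C > (0 : ℝ), ∀ k : ℕ, 2 ≤ k → ∀ l ∈ Set.Icc (0 : ℝ) 1,
      (1 - l) ^ k * (if l = 0 then 0 else (Real.log (Real.exp 1 / l)) ^ (-p))
        ≤ C * (Real.log k) ^ (-p)) ∧
    (∀ p : ℝ, ∃ C > (0 : ℝ), ∀ k : ℕ, 2 ≤ k → ∀ l ∈ Set.Ioc (0 : ℝ) 1,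
      (1 - l) ^ k * l * (Real.log (Real.exp 1 / l)) ^ (-p)
        ≤ C * (k : ℝ)⁻¹ * (Real.log k) ^ (-p)) :=
  ⟨partA, partB⟩
end

section
/- Let H be a real Hilbert space, p > 0, and P : H → H a bounded linear operator which is self-adjoint and positive with ‖P‖ ≤ 1 (so its spectrum lies in [0,1]). Define f : [0,1] → ℝ by f(λ) := (ln(e/λ))^{-p} for λ ∈ (0,1] and f(0) := 0, and let e₁ := f(P) ψ for some ψ ∈ H, where f(P) is given by the continuous functional calculus. Then there exists a constant C > 0, independent of k and ψ, such that for every integer k ≥ 2: (i) ‖(I − P)^k e₁‖ ≤ C ‖ψ‖ (ln(k+2))^{-p}, and (ii) ‖(I − P)^k P e₁‖ ≤ C ‖ψ‖ k^{-1} (ln(k+2))^{-p}. -/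
/-!
Write `a = log (e / λ) ≥ 1` for `λ ∈ (0, 1]`. Since `log (k + 2) - a = log ((k + 2) λ / e) ≤ k λ`,
we get `log (k + 2) ≤ a (1 + k λ)`; combined with `(1 - λ)^k ≤ e^{-kλ}` and `(1 + x)^p ≤ C e^x` this
gives `(1 - λ)^k f(λ) ≤ C (log (k + 2))^{-p}` uniformly on `[0, 1]`. For the second bound split
`(1 - λ)^k λ = (1 - λ)^{k - ⌊k/2⌋} · λ (1 - λ)^{⌊k/2⌋}` and use `λ (1 - λ)^m ≤ 1 / (m + 1)`.
Both scalar bounds pass to `P` because `σ(P) ⊆ [0, 1]` and `‖g(P) ψ‖ ≤ sup_{σ(P)} |g| · ‖ψ‖`.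
-/

open Real Set

noncomputable def logSource (p l : ℝ) : ℝ :=
  if l = 0 then 0 else log (exp 1 / l) ^ (-p)

lemma one_le_log_exp_one_div {l : ℝ} (hl0 : 0 < l) (hl1 : l ≤ 1) : 1 ≤ log (exp 1 / l) := by
  rw [log_div (exp_ne_zero 1) hl0.ne', log_exp]
  linarith [log_nonpos hl0.le hl1]

lemma logSource_nonneg (p : ℝ) {l : ℝ} (hl0 : 0 ≤ l) (hl1 : l ≤ 1) : 0 ≤ logSource p l := by
  unfold logSource
  split_ifs with h
  · exact le_rfl
  · exact rpow_nonneg (zero_le_one.trans (one_le_log_exp_one_div (hl0.lt_of_ne' h) hl1)) _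

lemma continuousOn_logSource {p : ℝ} (hp : 0 < p) : ContinuousOn (logSource p) (Icc 0 1) := by
  intro l ⟨hl0, hl1⟩
  rcases hl0.eq_or_lt with rfl | hl0
  · have hlim : Filter.Tendsto (fun l => log (exp 1 / l) ^ (-p)) (nhdsWithin 0 (Ioi 0))
        (nhds 0) := by
      refine (tendsto_rpow_neg_atTop hp).comp (tendsto_log_atTop.comp ?_)
      have h := tendsto_inv_nhdsGT_zero.const_mul_atTop (exp_pos 1)
      simpa only [← div_eq_mul_inv] using h
    have : ContinuousWithinAt (logSource p) (Ioi 0) 0 := by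
      refine (hlim.congr' ?_).trans_eq ?_
      · filter_upwards [self_mem_nhdsWithin] with l hl
        simp [logSource, (mem_Ioi.1 hl).ne']
      · simp [logSource]
    exact (continuousWithinAt_Ioi_iff_Ici.1 this).mono Icc_subset_Ici_self
  · have hformula : ContinuousAt (fun l => log (exp 1 / l) ^ (-p)) l :=
      ((continuousAt_const.div continuousAt_id hl0.ne').log
        (div_pos (exp_pos 1) hl0).ne').rpow_const
        (Or.inl (zero_lt_one.trans_le (one_le_log_exp_one_div hl0 hl1)).ne')
    refine (hformula.congr ?_).continuousWithinAt
    filter_upwards [eventually_ne_nhds hl0.ne'] with x hx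
    simp [logSource, hx]

lemma one_sub_pow_le_exp_neg_mul {l : ℝ} (hl : l ≤ 1) (k : ℕ) : (1 - l) ^ k ≤ exp (-(k * l)) := by
  calc (1 - l) ^ k ≤ exp (-l) ^ k := pow_le_pow_left₀ (sub_nonneg.2 hl) (one_sub_le_exp_neg l) k
    _ = exp (-(k * l)) := by rw [← exp_nat_mul]; ring_nf

lemma mul_one_sub_pow_le_inv {l : ℝ} (hl0 : 0 ≤ l) (hl1 : l ≤ 1) (m : ℕ) :
    l * (1 - l) ^ m ≤ ((m : ℝ) + 1)⁻¹ := by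
  have hexp : 1 + m * l ≤ exp (m * l) := by linarith [add_one_le_exp (m * l)]
  have h : (1 - l) ^ m ≤ (1 + m * l)⁻¹ := by
    calc (1 - l) ^ m ≤ exp (-(m * l)) := one_sub_pow_le_exp_neg_mul hl1 m
      _ = (exp (m * l))⁻¹ := exp_neg _
      _ ≤ (1 + m * l)⁻¹ := inv_anti₀ (by positivity) hexp
  calc l * (1 - l) ^ m ≤ l * (1 + m * l)⁻¹ := mul_le_mul_of_nonneg_left h hl0
    _ ≤ ((m : ℝ) + 1)⁻¹ := by
      rw [← div_eq_mul_inv, div_le_iff₀ (by positivity)]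
      field_simp
      nlinarith

lemma exists_one_add_rpow_le_mul_exp (p : ℝ) :
    ∃ C, ∀ x : ℝ, 0 ≤ x → (1 + x) ^ p ≤ C * exp x := by
  set n := ⌈p⌉₊
  refine ⟨n.factorial * exp 1, fun x hx => ?_⟩
  calc (1 + x) ^ p ≤ (1 + x) ^ (n : ℝ) :=
        rpow_le_rpow_of_exponent_le (by linarith) (Nat.le_ceil p)
    _ = (1 + x) ^ n := rpow_natCast _ _
    _ ≤ n.factorial * exp (1 + x) := by
        rw [← div_le_iff₀' (by positivity)]
        exact pow_div_factorial_le_exp _ (by linarith) n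
    _ = n.factorial * exp 1 * exp x := by rw [exp_add, mul_assoc]

lemma log_natCast_add_two_le (k : ℕ) {l : ℝ} (hl0 : 0 < l) (hl1 : l ≤ 1) :
    log (k + 2) ≤ log (exp 1 / l) * (1 + k * l) := by
  have ha := one_le_log_exp_one_div hl0 hl1
  have he : 2 ≤ exp 1 := by linarith [add_one_le_exp (1 : ℝ)]
  have hdiff : log (k + 2) - log (exp 1 / l) ≤ k * l := by
    rw [← log_div (by positivity) (by positivity), div_div_eq_mul_div]
    refine (log_le_sub_one_of_pos (by positivity)).trans ?_
    rw [sub_le_iff_le_add, div_le_iff₀ (exp_pos 1)]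
    have hkl : 0 ≤ k * l := by positivity
    nlinarith [mul_le_mul_of_nonneg_left he (by positivity : (0:ℝ) ≤ k * l + 1)]
  nlinarith [mul_nonneg (k.cast_nonneg : (0:ℝ) ≤ k) hl0.le]

lemma log_natCast_add_two_pos (k : ℕ) : 0 < log ((k : ℝ) + 2) :=
  log_pos (by linarith [k.cast_nonneg (α := ℝ)])

lemma exists_one_sub_pow_mul_logSource_le {p : ℝ} (hp : 0 ≤ p) :
    ∃ C > 0, ∀ k : ℕ, ∀ l ∈ Icc (0 : ℝ) 1,
      (1 - l) ^ k * logSource p l ≤ C * log (k + 2) ^ (-p) := by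
  obtain ⟨C, hC⟩ := exists_one_add_rpow_le_mul_exp p
  have hC0 : 0 < C := zero_lt_one.trans_le (by simpa using hC 0 le_rfl)
  refine ⟨C, hC0, fun k l ⟨hl0, hl1⟩ => ?_⟩
  have hL := log_natCast_add_two_pos k
  rcases hl0.eq_or_lt with rfl | hl0
  · simp only [logSource, if_true, mul_zero]
    positivity
  set a := log (exp 1 / l)
  have ha : 0 < a := zero_lt_one.trans_le (one_le_log_exp_one_div hl0 hl1)
  have hkey : log (k + 2) ^ p ≤ C * (a ^ p * exp (k * l)) :=
    calc log (k + 2) ^ p ≤ (a * (1 + k * l)) ^ p :=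
          rpow_le_rpow hL.le (log_natCast_add_two_le k hl0 hl1) hp
      _ = a ^ p * (1 + k * l) ^ p := mul_rpow ha.le (by positivity)
      _ ≤ a ^ p * (C * exp (k * l)) := by gcongr; exact hC _ (by positivity)
      _ = C * (a ^ p * exp (k * l)) := by ring
  calc (1 - l) ^ k * logSource p l ≤ exp (-(k * l)) * a ^ (-p) := by
        rw [logSource, if_neg hl0.ne']
        gcongr
        exact one_sub_pow_le_exp_neg_mul hl1 k
    _ = (a ^ p * exp (k * l))⁻¹ := by rw [exp_neg, rpow_neg ha.le, mul_inv, mul_comm]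
    _ ≤ C * log (k + 2) ^ (-p) := by
        rw [rpow_neg hL.le, ← div_eq_mul_inv, le_div_iff₀ (by positivity), ← div_eq_inv_mul,
          div_le_iff₀ (by positivity)]
        exact hkey

lemma log_natCast_add_two_le_two_mul_log_sub_half (k : ℕ) :
    log (k + 2) ≤ 2 * log (((k - k / 2 : ℕ) : ℝ) + 2) := by
  rw [← log_rpow (by positivity)]
  refine log_le_log (by positivity) ?_
  have h : k + 2 ≤ (k - k / 2 + 2) ^ 2 := by
    have : k ≤ 2 * (k - k / 2) := by omega
    nlinarith
  rw [rpow_two]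
  exact_mod_cast h

lemma exists_one_sub_pow_mul_self_mul_logSource_le {p : ℝ} (hp : 0 ≤ p) :
    ∃ C, ∀ k : ℕ, 1 ≤ k → ∀ l ∈ Icc (0 : ℝ) 1,
      (1 - l) ^ k * (l * logSource p l) ≤ C * (k : ℝ)⁻¹ * log (k + 2) ^ (-p) := by
  obtain ⟨C, hC0, hC⟩ := exists_one_sub_pow_mul_logSource_le hp
  refine ⟨2 * 2 ^ p * C, fun k hk l hl => ?_⟩
  set m := k / 2
  set j := k - m
  have hL := log_natCast_add_two_pos k
  have hlog : log ((j : ℝ) + 2) ^ (-p) ≤ 2 ^ p * log (k + 2) ^ (-p) := by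
    calc log ((j : ℝ) + 2) ^ (-p) ≤ (log (k + 2) / 2) ^ (-p) :=
          rpow_le_rpow_of_nonpos (by positivity)
            (by linarith [log_natCast_add_two_le_two_mul_log_sub_half k]) (by linarith)
      _ = 2 ^ p * log (k + 2) ^ (-p) := by
          rw [div_rpow hL.le zero_le_two, rpow_neg zero_le_two, div_inv_eq_mul, mul_comm]
  have hm : ((m : ℝ) + 1)⁻¹ ≤ 2 * (k : ℝ)⁻¹ := by
    rw [← div_eq_mul_inv, le_div_iff₀ (by positivity), ← div_eq_inv_mul,
      div_le_iff₀ (by positivity)]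
    have : k ≤ 2 * (m + 1) := by omega
    exact_mod_cast this
  have hsplit : (1 - l) ^ k * (l * logSource p l)
      = ((1 - l) ^ j * logSource p l) * (l * (1 - l) ^ m) := by
    rw [show k = j + m by omega, pow_add]
    ring
  calc (1 - l) ^ k * (l * logSource p l)
      = ((1 - l) ^ j * logSource p l) * (l * (1 - l) ^ m) := hsplit
    _ ≤ (C * (2 ^ p * log (k + 2) ^ (-p))) * (2 * (k : ℝ)⁻¹) :=
        mul_le_mul ((hC j l hl).trans (by gcongr)) ((mul_one_sub_pow_le_inv hl.1 hl.2 m).trans hm)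
          (mul_nonneg hl.1 (pow_nonneg (sub_nonneg.2 hl.2) _)) (by positivity)
    _ = 2 * 2 ^ p * C * (k : ℝ)⁻¹ * log (k + 2) ^ (-p) := by ring

section CFC

variable {A : Type*} [Ring A] [StarRing A] [TopologicalSpace A] [Algebra ℝ A]
  [ContinuousFunctionalCalculus ℝ A IsSelfAdjoint]

lemma cfc_one_sub_pow_mul {a : A} (ha : IsSelfAdjoint a) (k : ℕ) {g : ℝ → ℝ}
    (hg : ContinuousOn g (spectrum ℝ a)) :
    cfc (fun l => (1 - l) ^ k * g l) a = (1 - a) ^ k * cfc g a := by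
  rw [cfc_mul (fun l => (1 - l) ^ k) g a (by fun_prop) hg, cfc_pow (fun l : ℝ => 1 - l) k a,
    cfc_sub (fun _ : ℝ => 1) (fun l : ℝ => l) a, cfc_const_one ℝ a, cfc_id' ℝ a]

lemma cfc_id_mul {a : A} (ha : IsSelfAdjoint a) {g : ℝ → ℝ}
    (hg : ContinuousOn g (spectrum ℝ a)) :
    cfc (fun l => l * g l) a = a * cfc g a := by
  rw [cfc_mul (fun l : ℝ => l) g a (by fun_prop) hg, cfc_id' ℝ a]

end CFC

namespace ContinuousLinearMap

variable {H : Type*} [NormedAddCommGroup H] [InnerProductSpace ℝ H] [CompleteSpace H]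

lemma spectrum_subset_Icc_of_isPositive {P : H →L[ℝ] H} (hP : P.IsPositive) (hP1 : ‖P‖ ≤ 1) :
    spectrum ℝ P ⊆ Icc 0 1 := by
  intro μ hμ
  refine ⟨spectrum_nonneg_of_nonneg ((nonneg_iff_isPositive P).2 hP) hμ, ?_⟩
  calc μ ≤ ‖μ‖ := le_abs_self μ
    _ ≤ ‖P‖ * ‖(1 : H →L[ℝ] H)‖ := spectrum.norm_le_norm_mul_of_mem hμ
    _ ≤ 1 := mul_le_one₀ hP1 (norm_nonneg _) norm_id_le

lemma norm_apply_le_of_star_mul_self_le {A : H →L[ℝ] H} {c : ℝ} (hc : 0 ≤ c)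
    (hA : star A * A ≤ algebraMap ℝ (H →L[ℝ] H) (c ^ 2)) (x : H) : ‖A x‖ ≤ c * ‖x‖ := by
  have h := ((le_def _ _).1 hA).inner_nonneg_left x
  have : ‖A x‖ ^ 2 ≤ (c * ‖x‖) ^ 2 := by
    simpa [Algebra.algebraMap_eq_smul_one, inner_sub_left, real_inner_smul_left, star_eq_adjoint,
      adjoint_inner_left, real_inner_self_eq_norm_sq, mul_pow] using h
  exact (pow_le_pow_iff_left₀ (norm_nonneg _) (by positivity) two_ne_zero).1 this

variable [ContinuousFunctionalCalculus ℝ (H →L[ℝ] H) IsSelfAdjoint]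

-- The calculus need not be isometric, so we go through `g(P)^2 ≤ c^2` in the Loewner order.
lemma norm_cfc_apply_le {P : H →L[ℝ] H} (hP : IsSelfAdjoint P) {g : ℝ → ℝ}
    (hg : ContinuousOn g (spectrum ℝ P)) {c : ℝ} (hc : 0 ≤ c)
    (hgc : ∀ x ∈ spectrum ℝ P, |g x| ≤ c) (ψ : H) : ‖cfc g P ψ‖ ≤ c * ‖ψ‖ := by
  let := instStarOrderedRingRCLike (𝕜 := ℝ) (H := H)
  refine norm_apply_le_of_star_mul_self_le hc ?_ ψ
  rw [(cfc_predicate g P).star_eq, ← cfc_mul g g P]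
  refine cfc_le_algebraMap _ _ _ fun x hx => ?_
  simpa [← sq, sq_abs] using pow_le_pow_left₀ (abs_nonneg _) (hgc x hx) 2

lemma norm_one_sub_pow_apply_cfc_le {P : H →L[ℝ] H} (hP : IsSelfAdjoint P)
    (hspec : spectrum ℝ P ⊆ Icc 0 1) {g : ℝ → ℝ} (hg : ContinuousOn g (Icc 0 1))
    (hg0 : ∀ l ∈ Icc (0 : ℝ) 1, 0 ≤ g l) (k : ℕ) {c : ℝ}
    (hc : ∀ l ∈ Icc (0 : ℝ) 1, (1 - l) ^ k * g l ≤ c) (ψ : H) :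
    ‖((1 - P) ^ k) (cfc g P ψ)‖ ≤ c * ‖ψ‖ := by
  have hgP := hg.mono hspec
  have hgk0 : ∀ l ∈ Icc (0 : ℝ) 1, 0 ≤ (1 - l) ^ k * g l := fun l hl =>
    mul_nonneg (pow_nonneg (sub_nonneg.2 hl.2) k) (hg0 l hl)
  have h0 : (0 : ℝ) ∈ Icc 0 1 := left_mem_Icc.2 zero_le_one
  calc ‖((1 - P) ^ k) (cfc g P ψ)‖ = ‖cfc (fun l => (1 - l) ^ k * g l) P ψ‖ := by
        rw [cfc_one_sub_pow_mul hP k hgP]; rfl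
    _ ≤ c * ‖ψ‖ := by
        refine norm_cfc_apply_le hP (by fun_prop) ((hgk0 0 h0).trans (hc 0 h0)) (fun l hl => ?_) ψ
        rw [abs_of_nonneg (hgk0 l (hspec hl))]
        exact hc l (hspec hl)

end ContinuousLinearMap

/-- **Lemma A.2.** Let `H` be a real Hilbert space, `p > 0`, and `P` a self-adjoint
positive bounded linear operator with `‖P‖ ≤ 1`. With `f(λ) = (ln(e/λ))^{-p}` for
`λ ∈ (0,1]`, `f(0) = 0`, and `e₁ := f(P) ψ` (continuous functional calculus), there is a
constant `C > 0` independent of `k` and `ψ` such that for every `k ≥ 2`: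
`‖(I - P)^k e₁‖ ≤ C ‖ψ‖ (ln (k+2))^{-p}` and
`‖(I - P)^k P e₁‖ ≤ C ‖ψ‖ k⁻¹ (ln (k+2))^{-p}`. -/
theorem log_source_decay_of_powers
    {H : Type*} [NormedAddCommGroup H] [InnerProductSpace ℝ H] [CompleteSpace H]
    [ContinuousFunctionalCalculus ℝ (H →L[ℝ] H) (IsSelfAdjoint : (H →L[ℝ] H) → Prop)]
    (P : H →L[ℝ] H) (hP : ‖P‖ ≤ 1) (hsa : IsSelfAdjoint P)
    (hpos : ∀ x : H, 0 ≤ (inner ℝ (P x) x : ℝ))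
    (p : ℝ) (hp : 0 < p) :
    ∃ C > (0 : ℝ), ∀ ψ : H, ∀ k : ℕ, 2 ≤ k →
      ‖((1 - P) ^ k)
          ((cfc (fun l : ℝ => if l = 0 then 0 else (Real.log (Real.exp 1 / l)) ^ (-p)) P) ψ)‖
        ≤ C * ‖ψ‖ * (Real.log (k + 2)) ^ (-p) ∧
      ‖((1 - P) ^ k)
          (P ((cfc (fun l : ℝ => if l = 0 then 0 else (Real.log (Real.exp 1 / l)) ^ (-p)) P) ψ))‖
        ≤ C * ‖ψ‖ * (k : ℝ)⁻¹ * (Real.log (k + 2)) ^ (-p) := by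
  have hspec : spectrum ℝ P ⊆ Icc 0 1 :=
    ContinuousLinearMap.spectrum_subset_Icc_of_isPositive
      (ContinuousLinearMap.isPositive_def'.2 ⟨hsa, hpos⟩) hP
  have hf := continuousOn_logSource hp
  have hf0 : ∀ l ∈ Icc (0 : ℝ) 1, 0 ≤ logSource p l := fun l hl => logSource_nonneg p hl.1 hl.2
  obtain ⟨C₁, hC₁, h₁⟩ := exists_one_sub_pow_mul_logSource_le hp.le
  obtain ⟨C₂, h₂⟩ := exists_one_sub_pow_mul_self_mul_logSource_le hp.le
  refine ⟨max C₁ C₂, lt_max_of_lt_left hC₁, fun ψ k hk => ?_⟩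
  change ‖((1 - P) ^ k) (cfc (logSource p) P ψ)‖ ≤ _ ∧
    ‖((1 - P) ^ k) (P (cfc (logSource p) P ψ))‖ ≤ _
  have hPf : P (cfc (logSource p) P ψ) = cfc (fun l => l * logSource p l) P ψ := by
    rw [cfc_id_mul hsa (hf.mono hspec)]; rfl
  have hL : 0 ≤ log (k + 2) ^ (-p) := rpow_nonneg (log_natCast_add_two_pos k).le _
  rw [hPf]
  constructor
  · calc _ ≤ C₁ * log (k + 2) ^ (-p) * ‖ψ‖ :=
          ContinuousLinearMap.norm_one_sub_pow_apply_cfc_le hsa hspec hf hf0 k (h₁ k) ψ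
      _ ≤ max C₁ C₂ * ‖ψ‖ * log (k + 2) ^ (-p) := by
          rw [mul_right_comm]; gcongr; exact le_max_left _ _
  · calc _ ≤ C₂ * (k : ℝ)⁻¹ * log (k + 2) ^ (-p) * ‖ψ‖ :=
          ContinuousLinearMap.norm_one_sub_pow_apply_cfc_le hsa hspec (by fun_prop)
            (fun l hl => mul_nonneg hl.1 (hf0 l hl)) k (h₂ k (by omega)) ψ
      _ ≤ max C₁ C₂ * ‖ψ‖ * (k : ℝ)⁻¹ * log (k + 2) ^ (-p) := by
          rw [mul_right_comm, mul_right_comm _ (k : ℝ)⁻¹]; gcongr; exact le_max_right _ _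
end

section
/- Let p ≥ 1 and C > 0, and define ĥ(t) := t e^{−2 t^{-1/(2p)}} for t > 0, ĥ(0) := 0. Then there exists a constant D > 0, depending only on p and C, with the following property: for every ε > 0 satisfying 1 ≥ (−ln(C ε^{2/3}))^{-2p} ≥ ε and every Borel probability measure μ on (0,1] such that ∫₀¹ ĥ((1 − ln λ)^{-2p}) dμ(λ) = C ε², one has ∫₀¹ (1 − ln λ)^{-2p} dμ(λ) ≤ D (−ln(ε^{2/3}))^{-2p}. -/
/-!
For a threshold `τ > 0`, a value `t = (1 - ln λ)^{-2p}` above `τ^{-2p}` has `t^{-1/(2p)} < τ`, so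
`t ≤ e^{2τ} ĥ(t)`; integrating gives `∫ t dμ ≤ τ^{-2p} + e^{2τ} C ε²`. With `τ = -ln ε^{2/3}` the
second term is `C e^{-τ} ≤ C (2p)^{2p} τ^{-2p}`. This choice needs `ε < 1`: for `ε = 1` the bound
`ĥ ≤ e^{-2}` on `(0, 1]` forces `C ≤ e^{-2}`, and then `(-ln C)^{-2p} < 1 = ε`.
-/

open MeasureTheory Real Set

noncomputable def hHat (p t : ℝ) : ℝ := t * exp (-2 * t ^ (-(1 / (2 * p))))

lemma exp_neg_le_mul_rpow_neg {q x : ℝ} (hq : 0 ≤ q) (hx : 0 < x) :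
    exp (-x) ≤ q ^ q * x ^ (-q) := by
  have h := ProbabilityTheory.rpow_abs_le_mul_exp_abs x hq one_ne_zero
  rw [abs_of_pos hx, abs_one, div_one, one_mul] at h
  rw [rpow_neg hx.le, exp_neg, ← div_eq_mul_inv, le_div_iff₀ (by positivity),
    inv_mul_le_iff₀ (exp_pos x), mul_comm]
  exact h

lemma one_sub_log_rpow_mem_Ioc {q l : ℝ} (hq : q ≤ 0) (hl : l ∈ Ioc 0 1) :
    (1 - log l) ^ q ∈ Ioc 0 1 := by
  have h : 1 ≤ 1 - log l := by linarith [log_nonpos hl.1.le hl.2]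
  exact ⟨rpow_pos_of_pos (by linarith) q, rpow_le_one_of_one_le_of_nonpos h hq⟩

lemma hHat_le_exp_neg_two {p t : ℝ} (hp : 0 < p) (ht : t ∈ Ioc 0 1) : hHat p t ≤ exp (-2) := by
  have h : 1 ≤ t ^ (-(1 / (2 * p))) :=
    one_le_rpow_of_pos_of_le_one_of_nonpos ht.1 ht.2 (by rw [neg_nonpos]; positivity)
  calc hHat p t ≤ 1 * exp (-2) := by
        unfold hHat
        gcongr
        · exact ht.2
        · linarith
    _ = exp (-2) := one_mul _

lemma le_rpow_neg_add_exp_mul_hHat {p τ t : ℝ} (hp : 0 < p) (hτ : 0 < τ) (ht : 0 < t) :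
    t ≤ τ ^ (-(2 * p)) + exp (2 * τ) * hHat p t := by
  rcases le_or_gt t (τ ^ (-(2 * p))) with hle | hlt
  · have : 0 ≤ exp (2 * τ) * hHat p t := by unfold hHat; positivity
    linarith
  · have hroot : t ^ (-(1 / (2 * p))) ≤ τ := by
      calc t ^ (-(1 / (2 * p))) ≤ (τ ^ (-(2 * p))) ^ (-(1 / (2 * p))) :=
            rpow_le_rpow_of_nonpos (by positivity) hlt.le (by rw [neg_nonpos]; positivity)
        _ = τ := by rw [← rpow_mul hτ.le]; field_simp; simp
    calc t = exp (2 * τ) * (t * exp (-2 * τ)) := by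
          rw [mul_left_comm, ← exp_add]; simp
      _ ≤ exp (2 * τ) * hHat p t :=
          mul_le_mul_of_nonneg_left
            (mul_le_mul_of_nonneg_left (exp_le_exp.2 (by linarith)) ht.le) (exp_pos _).le
      _ ≤ τ ^ (-(2 * p)) + exp (2 * τ) * hHat p t :=
          le_add_of_nonneg_left (rpow_pos_of_pos hτ _).le

lemma rpow_neg_log_lt_one {q C : ℝ} (hq : q < 0) (hC : 0 < C) (hC' : C < exp (-1)) :
    (-log C) ^ q < 1 := by
  have h := log_lt_log hC hC'
  rw [log_exp] at h
  exact rpow_lt_one_of_one_lt_of_neg (by linarith) hq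

section Integral

variable {α : Type*} [MeasurableSpace α] {ν : Measure α} [IsFiniteMeasure ν] {f : α → ℝ} {p : ℝ}

lemma integral_hHat_le_exp_neg_two (hν : ν.real univ ≤ 1) (hp : 0 < p)
    (hf : ∀ᵐ x ∂ν, f x ∈ Ioc 0 1) : ∫ x, hHat p (f x) ∂ν ≤ exp (-2) := by
  have hnonneg : ∀ᵐ x ∂ν, 0 ≤ hHat p (f x) :=
    hf.mono fun x hx => by have := hx.1; unfold hHat; positivity
  calc ∫ x, hHat p (f x) ∂ν ≤ ∫ _, exp (-2) ∂ν :=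
        integral_mono_of_nonneg hnonneg (integrable_const _)
          (hf.mono fun x hx => hHat_le_exp_neg_two hp hx)
    _ = ν.real univ * exp (-2) := by rw [integral_const, smul_eq_mul]
    _ ≤ exp (-2) := mul_le_of_le_one_left (exp_pos _).le hν

lemma integral_le_rpow_neg_add_exp_mul_integral_hHat (hν : ν.real univ ≤ 1) (hp : 0 < p)
    {τ : ℝ} (hτ : 0 < τ) (hf : Integrable f ν) (hf_pos : ∀ᵐ x ∂ν, 0 < f x)
    (hg : Integrable (fun x => hHat p (f x)) ν) :
    ∫ x, f x ∂ν ≤ τ ^ (-(2 * p)) + exp (2 * τ) * ∫ x, hHat p (f x) ∂ν := by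
  calc ∫ x, f x ∂ν ≤ ∫ x, (τ ^ (-(2 * p)) + exp (2 * τ) * hHat p (f x)) ∂ν :=
        integral_mono_ae hf ((integrable_const _).add (hg.const_mul _))
          (hf_pos.mono fun x hx => le_rpow_neg_add_exp_mul_hHat hp hτ hx)
    _ = ν.real univ * τ ^ (-(2 * p)) + exp (2 * τ) * ∫ x, hHat p (f x) ∂ν := by
        rw [integral_add (integrable_const _) (hg.const_mul _), integral_const, smul_eq_mul,
          integral_const_mul]
    _ ≤ τ ^ (-(2 * p)) + exp (2 * τ) * ∫ x, hHat p (f x) ∂ν := by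
        gcongr
        exact mul_le_of_le_one_left (rpow_pos_of_pos hτ _).le hν

lemma lt_one_of_integral_hHat_eq (hν : ν.real univ ≤ 1) (hp : 0 < p) {C ε : ℝ} (hC : 0 < C)
    (hf : ∀ᵐ x ∂ν, f x ∈ Ioc 0 1) (hg : ∫ x, hHat p (f x) ∂ν = C * ε ^ 2)
    (h1 : (-log (C * ε ^ ((2 : ℝ) / 3))) ^ (-(2 * p)) ≤ 1)
    (h2 : ε ≤ (-log (C * ε ^ ((2 : ℝ) / 3))) ^ (-(2 * p))) :
    ε < 1 := by
  refine (h2.trans h1).lt_of_ne ?_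
  rintro rfl
  have hC' : C ≤ exp (-2) := by
    simpa [hg] using integral_hHat_le_exp_neg_two hν hp hf
  simp only [one_rpow, mul_one] at h2
  exact (rpow_neg_log_lt_one (by linarith) hC
    (hC'.trans_lt (exp_lt_exp.2 (by norm_num)))).not_ge h2

lemma integral_le_of_integral_hHat_eq (hν : ν.real univ ≤ 1) (hp : 0 < p) {C ε : ℝ}
    (hC : 0 < C) (hε : 0 < ε) (hε1 : ε < 1) (hf : Integrable f ν) (hf_pos : ∀ᵐ x ∂ν, 0 < f x)
    (hg : ∫ x, hHat p (f x) ∂ν = C * ε ^ 2) :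
    ∫ x, f x ∂ν ≤ (1 + C * (2 * p) ^ (2 * p)) * (-log (ε ^ ((2 : ℝ) / 3))) ^ (-(2 * p)) := by
  set τ := -log (ε ^ ((2 : ℝ) / 3))
  have hτ : 0 < τ := neg_pos.2 (log_neg (by positivity) (rpow_lt_one hε.le hε1 (by norm_num)))
  -- the threshold τ is chosen so that e^{2τ} ε² = e^{-τ}
  have hexp : exp (2 * τ) * (C * ε ^ 2) = C * exp (-τ) := by
    have hε2 : ε ^ 2 = exp (-τ) ^ 3 := by
      rw [neg_neg, exp_log (by positivity), ← rpow_natCast _ 3, ← rpow_mul hε.le]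
      norm_num
    rw [hε2, ← exp_nat_mul, mul_left_comm, ← exp_add]
    ring_nf
  have hg_int : Integrable (fun x => hHat p (f x)) ν :=
    Integrable.of_integral_ne_zero (by rw [hg]; positivity)
  calc ∫ x, f x ∂ν ≤ τ ^ (-(2 * p)) + exp (2 * τ) * (C * ε ^ 2) :=
        hg ▸ integral_le_rpow_neg_add_exp_mul_integral_hHat hν hp hτ hf hf_pos hg_int
    _ = τ ^ (-(2 * p)) + C * exp (-τ) := by rw [hexp]
    _ ≤ τ ^ (-(2 * p)) + C * ((2 * p) ^ (2 * p) * τ ^ (-(2 * p))) := by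
        gcongr
        exact exp_neg_le_mul_rpow_neg (by positivity) hτ
    _ = (1 + C * (2 * p) ^ (2 * p)) * τ ^ (-(2 * p)) := by ring

end Integral

theorem spectral_log_bound_from_h_integral_general
    (p C : ℝ) (hp : 1 ≤ p) (hC : 0 < C)
    (hh : ℝ → ℝ)
    (hhdef : ∀ t : ℝ, 0 < t → hh t = t * Real.exp (-2 * t ^ (-(1 / (2 * p))))) :
    ∃ D > (0 : ℝ), ∀ ε : ℝ, 0 < ε →
      (-Real.log (C * ε ^ ((2 : ℝ) / 3))) ^ (-(2 * p)) ≤ 1 →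
      ε ≤ (-Real.log (C * ε ^ ((2 : ℝ) / 3))) ^ (-(2 * p)) →
      ∀ μ : Measure ℝ, IsProbabilityMeasure μ → μ (Set.Ioc (0 : ℝ) 1)ᶜ = 0 →
        (∫ l in Set.Ioc (0 : ℝ) 1, hh ((1 - Real.log l) ^ (-(2 * p))) ∂μ) = C * ε ^ 2 →
        (∫ l in Set.Ioc (0 : ℝ) 1, (1 - Real.log l) ^ (-(2 * p)) ∂μ) ≤
          D * (-Real.log (ε ^ ((2 : ℝ) / 3))) ^ (-(2 * p)) := by
  have hp0 : 0 < p := by linarith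
  refine ⟨1 + C * (2 * p) ^ (2 * p), by positivity, ?_⟩
  intro ε hε h1 h2 μ _ _ hint
  have hf : ∀ᵐ l ∂μ.restrict (Ioc 0 1), (1 - log l) ^ (-(2 * p)) ∈ Ioc (0 : ℝ) 1 :=
    (ae_restrict_mem measurableSet_Ioc).mono fun l hl =>
      one_sub_log_rpow_mem_Ioc (by linarith) hl
  have hν : (μ.restrict (Ioc 0 1)).real univ ≤ 1 := by simp
  have hint' : ∫ l in Ioc 0 1, hHat p ((1 - log l) ^ (-(2 * p))) ∂μ = C * ε ^ 2 := by
    rw [← hint]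
    exact setIntegral_congr_fun measurableSet_Ioc fun l hl =>
      (hhdef _ (one_sub_log_rpow_mem_Ioc (by linarith) hl).1).symm
  have hf_int : Integrable (fun l => (1 - log l) ^ (-(2 * p))) (μ.restrict (Ioc 0 1)) :=
    Integrable.of_bound (by fun_prop : Measurable _).aestronglyMeasurable 1
      (hf.mono fun l hl => by rw [norm_of_nonneg hl.1.le]; exact hl.2)
  exact integral_le_of_integral_hHat_eq hν hp0 hC hε
    (lt_one_of_integral_hHat_eq hν hp0 hC hf hint' h1 h2) hf_int (hf.mono fun _ h => h.1) hint'

/-- **Lemma A.4.** Let `p ≥ 1`, `C > 0` and `ĥ(t) = t e^{-2 t^{-1/(2p)}}` (with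
`ĥ(0) = 0`). There is `D > 0`, depending only on `p` and `C`, such that for every
`ε > 0` with `1 ≥ (-ln(C ε^{2/3}))^{-2p} ≥ ε` and every Borel probability measure `μ`
on `(0,1]` with `∫ ĥ((1 - ln λ)^{-2p}) dμ(λ) = C ε²`, one has
`∫ (1 - ln λ)^{-2p} dμ(λ) ≤ D (-ln(ε^{2/3}))^{-2p}`. -/
theorem spectral_log_bound_from_h_integral
    (p C : ℝ) (hp : 1 ≤ p) (hC : 0 < C)
    (hh : ℝ → ℝ) (hh0 : hh 0 = 0)
    (hhdef : ∀ t : ℝ, 0 < t → hh t = t * Real.exp (-2 * t ^ (-(1 / (2 * p))))) :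
    ∃ D > (0 : ℝ), ∀ ε : ℝ, 0 < ε →
      (-Real.log (C * ε ^ ((2 : ℝ) / 3))) ^ (-(2 * p)) ≤ 1 →
      ε ≤ (-Real.log (C * ε ^ ((2 : ℝ) / 3))) ^ (-(2 * p)) →
      ∀ μ : Measure ℝ, IsProbabilityMeasure μ → μ (Set.Ioc (0 : ℝ) 1)ᶜ = 0 →
        (∫ l in Set.Ioc (0 : ℝ) 1, hh ((1 - Real.log l) ^ (-(2 * p))) ∂μ) = C * ε ^ 2 →
        (∫ l in Set.Ioc (0 : ℝ) 1, (1 - Real.log l) ^ (-(2 * p)) ∂μ) ≤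
          D * (-Real.log (ε ^ ((2 : ℝ) / 3))) ^ (-(2 * p)) :=
  spectral_log_bound_from_h_integral_general p C hp hC hh hhdef
end
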